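/- arXiv:1107.2392 — 4 statements merged into one kernel-verified Lean document; each statement's English description precedes it below -/
import Mathlib

section
/- Let A = (a_{ij}) be the n×n matrix with a_{ii} = L_{ω_i}^{[a,b]}, a_{i,i+1} = 1, a_{ij} = 0 for j > i+1, and a_{ij} = L_{ω_j ω_{j+1} … ω_i}^{[a,b]} for j < i. Then det(A) = L_{ωₙ ω_{n-1} … ω₁}^{[a,b]}. -/
/-- Chen iterated integral `L_{ω₁ω₂…ωₚ}^{[a,b]}`, defined recursively by
`L_∅^{[a,b]} = 1` and `L_{ω₁…ωₚ}^{[a,b]} = ∫_a^b ω₁(t) L_{ω₂…ωₚ}^{[a,t]} dt`. -/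
noncomputable def chen : List (ℝ → ℝ) → ℝ → ℝ → ℝ
  | [], _, _ => 1
  | ω :: ωs, a, b => ∫ t in a..b, ω t * chen ωs a t

lemma chen_continuous : ∀ (ws : List (ℝ → ℝ)), (∀ f ∈ ws, Continuous f) → ∀ a : ℝ,
    Continuous (fun b => chen ws a b)
  | [], _, a => by simpa [chen] using continuous_const
  | ω :: ws, h, a => by
    have hω : Continuous ω := h ω (by simp)
    have hws := chen_continuous ws (fun f hf => h f (List.mem_cons_of_mem _ hf)) a
    have hg : Continuous fun t => ω t * chen ws a t := hω.mul hws
    simpa [chen] using intervalIntegral.continuous_primitive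
      (fun c d => hg.intervalIntegrable c d) a

lemma chen_hasDerivAt (ω : ℝ → ℝ) (ws : List (ℝ → ℝ)) (h : ∀ f ∈ ω :: ws, Continuous f)
    (a b : ℝ) : HasDerivAt (fun x => chen (ω :: ws) a x) (ω b * chen ws a b) b := by
  have hω : Continuous ω := h ω (by simp)
  have hws := chen_continuous ws (fun f hf => h f (List.mem_cons_of_mem _ hf)) a
  have hg : Continuous fun t => ω t * chen ws a t := hω.mul hws
  have := intervalIntegral.integral_hasDerivAt_right (f := fun t => ω t * chen ws a t)
    (a := a) (b := b) (hg.intervalIntegrable a b)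
    (hg.stronglyMeasurableAtFilter _ _) hg.continuousAt
  simpa [chen] using this

lemma chen_self (l : List (ℝ → ℝ)) (h : l ≠ []) (a : ℝ) : chen l a a = 0 := by
  cases l with
  | nil => exact absurd rfl h
  | cons ω ws => simp [chen]

lemma chen_antipode (ws : List (ℝ → ℝ)) (h : ∀ f ∈ ws, Continuous f) (hne : ws ≠ [])
    (a b : ℝ) :
    ∑ k ∈ Finset.range (ws.length + 1),
      (-1 : ℝ) ^ k * (chen (ws.drop k) a b * chen (ws.take k).reverse a b) = 0 := by
  set m := ws.length with hm
  have hcont : ∀ l : List (ℝ → ℝ), l.Sublist ws → ∀ f ∈ l, Continuous f :=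
    fun l hl f hf => h f (hl.mem hf)
  -- derivative data
  set c : ℕ → ℝ → ℝ := fun k x =>
    if hk : k < m then ws[k] x * (chen (ws.drop (k+1)) a x * chen (ws.take k).reverse a x)
    else 0 with hc
  have hF : ∀ x : ℝ, HasDerivAt
      (fun y => ∑ k ∈ Finset.range (m + 1),
        (-1 : ℝ) ^ k * (chen (ws.drop k) a y * chen (ws.take k).reverse a y))
      (∑ k ∈ Finset.range (m + 1),
        (-1 : ℝ) ^ k * (c k x + (if k = 0 then 0 else c (k-1) x))) x := by
    intro x
    apply HasDerivAt.fun_sum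
    intro k hk
    rw [Finset.mem_range] at hk
    have hk' : k ≤ m := Nat.lt_succ_iff.mp hk
    -- derivative of drop part
    have hdrop : HasDerivAt (fun y => chen (ws.drop k) a y)
        (if hkk : k < m then ws[k] x * chen (ws.drop (k+1)) a x else 0) x := by
      by_cases hkk : k < m
      · rw [dif_pos hkk]
        have hrw : ws.drop k = ws[k] :: ws.drop (k+1) := List.drop_eq_getElem_cons (by omega)
        rw [hrw]
        exact chen_hasDerivAt _ _ (by rw [← hrw]; exact hcont _ (List.drop_sublist _ _)) a x
      · rw [dif_neg hkk]
        have : k = m := le_antisymm hk' (not_lt.mp hkk)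
        rw [this, List.drop_length]
        simpa [chen] using (hasDerivAt_const x (1:ℝ))
    have htake : HasDerivAt (fun y => chen (ws.take k).reverse a y)
        (if h0 : k = 0 then 0 else (ws[k-1]'(by omega)) x * chen (ws.take (k-1)).reverse a x) x := by
      by_cases h0 : k = 0
      · rw [dif_pos h0, h0]
        simpa [chen] using (hasDerivAt_const x (1:ℝ))
      · rw [dif_neg h0]
        obtain ⟨k', rfl⟩ : ∃ k', k = k' + 1 := ⟨k - 1, by omega⟩
        have hrw : (ws.take (k'+1)).reverse = ws[k'] :: (ws.take k').reverse := by
          rw [List.take_succ, List.getElem?_eq_getElem (by omega)]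
          simp
        rw [hrw]
        simp only [Nat.add_sub_cancel]
        exact chen_hasDerivAt _ _
          (by rw [← hrw]
              exact fun f hf => hcont _ (List.take_sublist _ _) f (List.mem_reverse.mp hf)) a x
    have hD := ((hdrop.mul htake).const_mul ((-1:ℝ)^k))
    have hval : (-1 : ℝ) ^ k * (c k x + (if k = 0 then 0 else c (k-1) x)) =
        (-1:ℝ)^k * ((if hkk : k < m then ws[k] x * chen (ws.drop (k+1)) a x else 0) *
            chen (ws.take k).reverse a x +
          chen (ws.drop k) a x *
            (if h0 : k = 0 then 0 else (ws[k-1]'(by omega)) x * chen (ws.take (k-1)).reverse a x)) := by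
      by_cases hkk : k < m <;> by_cases h0 : k = 0
      · subst h0; simp [hc, hkk]; ring
      · have hk1 : k - 1 < m := by omega
        have hk1' : k - 1 + 1 = k := by omega
        simp only [hc, dif_pos hkk, dif_pos hk1, if_neg h0, dif_neg h0, hk1']
        ring
      · subst h0; simp [hc, hkk]
      · have hkm : k = m := by omega
        have hk1 : k - 1 < m := by omega
        have hk1' : k - 1 + 1 = k := by omega
        simp only [hc, dif_neg hkk, dif_pos hk1, if_neg h0, dif_neg h0, hk1']
        ring
    rw [hval]
    exact hD
  have hzero : ∀ x : ℝ, (∑ k ∈ Finset.range (m + 1),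
      (-1 : ℝ) ^ k * (c k x + (if k = 0 then 0 else c (k-1) x))) = 0 := by
    intro x
    rw [Finset.sum_range_succ']
    have hstep : ∀ k, (-1:ℝ)^(k+1) * (c (k+1) x + (if k+1 = 0 then 0 else c (k+1-1) x)) =
        ((-1:ℝ)^(k+1) * c (k+1) x) - ((-1:ℝ)^k * c k x) := by
      intro k
      simp only [Nat.add_sub_cancel, if_neg (Nat.succ_ne_zero k), pow_succ]
      ring
    simp only [hstep]
    rw [Finset.sum_range_sub (fun k => (-1:ℝ)^k * c k x)]
    have hcm : c m x = 0 := dif_neg (lt_irrefl m)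
    simp [hcm]
  have hdiff : Differentiable ℝ (fun y => ∑ k ∈ Finset.range (m + 1),
      (-1 : ℝ) ^ k * (chen (ws.drop k) a y * chen (ws.take k).reverse a y)) :=
    fun x => (hF x).differentiableAt
  have hderiv : ∀ x : ℝ, deriv (fun y => ∑ k ∈ Finset.range (m + 1),
      (-1 : ℝ) ^ k * (chen (ws.drop k) a y * chen (ws.take k).reverse a y)) x = 0 :=
    fun x => by rw [(hF x).deriv]; exact hzero x
  have hconst := is_const_of_deriv_eq_zero hdiff hderiv b a
  rw [hconst]
  apply Finset.sum_eq_zero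
  intro k hk
  rw [Finset.mem_range] at hk
  by_cases hkm : k < m
  · rw [chen_self (ws.drop k) (by
      intro hnil
      rw [List.drop_eq_nil_iff] at hnil
      omega) a]
    ring
  · have hkm' : k = m := by omega
    subst hkm'
    rw [List.take_length, chen_self ws.reverse (by simpa using hne) a]
    ring

lemma filter_le_range (n p : ℕ) (h : p ≤ n) :
    (List.range n).filter (fun k => decide (p ≤ k)) = List.range' p (n - p) := by
  induction n with
  | zero => interval_cases p <;> simp
  | succ n ih =>
    rw [List.range_succ, List.filter_append]
    by_cases hpn : p ≤ n
    · rw [ih hpn]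
      have : (n+1) - p = (n - p) + 1 := by omega
      rw [this, List.range'_1_concat]
      simp [hpn, Nat.add_sub_cancel' hpn]
    · have hp : p = n + 1 := by omega
      subst hp
      rw [List.filter_eq_nil_iff.mpr, List.filter_eq_nil_iff.mpr] <;> simp [List.mem_range] <;>
        omega

lemma filter_interval_range (n p q : ℕ) (hpq : p ≤ q) (h : q < n) :
    (List.range n).filter (fun k => decide (p ≤ k ∧ k ≤ q)) = List.range' p (q + 1 - p) := by
  induction n with
  | zero => omega
  | succ n ih =>
    rw [List.range_succ, List.filter_append]
    by_cases hqn : q < n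
    · rw [ih hqn, List.filter_eq_nil_iff.mpr]
      · simp
      · simp; omega
    · have hq : q = n := by omega
      subst hq
      have h1 : (List.range q).filter (fun k => decide (p ≤ k ∧ k ≤ q)) =
          (List.range q).filter (fun k => decide (p ≤ k)) := by
        apply List.filter_congr
        intro k hk
        rw [List.mem_range] at hk
        simp; omega
      rw [h1, filter_le_range q p (by omega)]
      have h2 : q + 1 - p = (q - p) + 1 := by omega
      rw [h2, List.range'_1_concat]
      simp [Nat.add_sub_cancel' (show p ≤ q by omega), hpq]

lemma take_drop_range (n p len : ℕ) (h : p + len ≤ n) :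
    ((List.range n).drop p).take len = List.range' p len := by
  apply List.ext_getElem
  · simp; omega
  · intro i h1 h2
    simp only [List.getElem_take, List.getElem_drop, List.getElem_range, List.getElem_range']
    omega

lemma filter_finRange (n p q : ℕ) (hpq : p ≤ q) (h : q < n) :
    (List.finRange n).filter (fun t : Fin n => decide (p ≤ t.val ∧ t.val ≤ q)) =
      ((List.finRange n).drop p).take (q + 1 - p) := by
  apply List.map_injective_iff.mpr Fin.val_injective
  rw [List.map_take, List.map_drop,
    show (fun t : Fin n => decide (p ≤ t.val ∧ t.val ≤ q)) =
      ((fun k => decide (p ≤ k ∧ k ≤ q)) ∘ Fin.val) from rfl,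
    ← List.filter_map,
    show List.map Fin.val (List.finRange n) = List.range n from
      List.ext_getElem (by simp) (by simp),
    filter_interval_range n p q hpq h, take_drop_range n p (q+1-p) (by omega)]

lemma reverse_slice (l : List α) (i j : ℕ) (hij : i ≤ j) (hj : j < l.length) :
    ((l.reverse.drop i).take (j + 1 - i)).reverse = (l.drop (l.length - 1 - j)).take (j + 1 - i) := by
  apply List.ext_getElem
  · simp; omega
  · intro k h1 h2
    rw [List.getElem_reverse, List.getElem_take, List.getElem_drop, List.getElem_reverse,
      List.getElem_take, List.getElem_drop]
    congr 1
    simp only [List.length_take, List.length_drop, List.length_reverse] at h1 ⊢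
    omega

noncomputable def Pm (n : ℕ) (a b : ℝ) (v s : List (ℝ → ℝ)) : Matrix (Fin n) (Fin n) ℝ :=
  Matrix.of fun i j =>
    if (i : ℕ) = (j : ℕ) + 1 then 1
    else if (j : ℕ) + 1 < (i : ℕ) then 0
    else chen (((v.drop (i : ℕ)).take ((j : ℕ) + 1 - (i : ℕ))).reverse ++
      if (i : ℕ) = 0 then s else []) a b

lemma sum_antipode (v : List (ℝ → ℝ)) (h : ∀ f ∈ v, Continuous f) (hne : v ≠ []) (a b : ℝ) :
    ∑ k ∈ Finset.range v.length,
      (-1 : ℝ) ^ k * (chen ((v.take (k+1)).reverse) a b * chen (v.drop (k+1)) a b)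
      = chen v a b := by
  have h0 := chen_antipode v h hne a b
  rw [Finset.sum_range_succ'] at h0
  simp only [List.drop_zero, List.take_zero, List.reverse_nil, pow_succ] at h0
  have : chen [] a b = 1 := rfl
  rw [this] at h0
  have h1 : ∑ k ∈ Finset.range v.length,
      (-1:ℝ)^k * (-1) * (chen (v.drop (k+1)) a b * chen (v.take (k+1)).reverse a b)
      = - chen v a b := by linarith
  calc ∑ k ∈ Finset.range v.length,
      (-1 : ℝ) ^ k * (chen ((v.take (k+1)).reverse) a b * chen (v.drop (k+1)) a b)
      = - ∑ k ∈ Finset.range v.length,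
      (-1:ℝ)^k * (-1) * (chen (v.drop (k+1)) a b * chen (v.take (k+1)).reverse a b) := by
        rw [← Finset.sum_neg_distrib]
        apply Finset.sum_congr rfl
        intro k _
        ring
    _ = chen v a b := by rw [h1]; ring

lemma detPm (a b : ℝ) : ∀ (n : ℕ) (v : List (ℝ → ℝ)), v.length = n + 1 →
    ∀ (s : List (ℝ → ℝ)), (∀ f ∈ v, Continuous f) →
    (Pm (n+1) a b v s).det = ∑ k ∈ Finset.range (n+1),
      (-1:ℝ)^k * (chen ((v.take (k+1)).reverse ++ s) a b * chen (v.drop (k+1)) a b) := by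
  intro n
  induction n with
  | zero =>
    rintro (_|⟨ω, (_|⟨τ,v⟩)⟩) hv s hcont
    · simp at hv
    · rw [Matrix.det_fin_one]
      simp [Pm, chen]
    · simp at hv
  | succ n ih =>
    rintro (_|⟨ω, v⟩) hv s hcont
    · simp at hv
    · have hv' : v.length = n + 1 := by simpa using hv
      have hcont' : ∀ f ∈ v, Continuous f := fun f hf => hcont f (List.mem_cons_of_mem _ hf)
      rw [Matrix.det_succ_column_zero, Fin.sum_univ_succ, Fin.sum_univ_succ]
      have hA00 : Pm (n+2) a b (ω :: v) s 0 0 = chen (ω :: s) a b := by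
        simp [Pm]
      have hA10 : Pm (n+2) a b (ω :: v) s 1 0 = 1 := by
        simp [Pm]
      have hAi0 : ∀ i : Fin n, Pm (n+2) a b (ω :: v) s i.succ.succ 0 = 0 := by
        intro i
        have h1 : ((i.succ.succ : Fin (n+2)) : ℕ) = (i:ℕ) + 2 := rfl
        simp only [Pm, Matrix.of_apply, h1, Fin.val_zero]
        rw [if_neg (by omega), if_pos (by omega)]
      have hM0 : (Pm (n+2) a b (ω :: v) s).submatrix (Fin.succAbove 0) Fin.succ
          = Pm (n+1) a b v [] := by
        ext i j
        have hrow : ((Fin.succAbove 0 i : Fin (n+2)) : ℕ) = (i : ℕ) + 1 := by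
          simp [Fin.succAbove]
        simp only [Matrix.submatrix_apply, Pm, Matrix.of_apply, hrow, Fin.val_succ]
        rw [List.drop_succ_cons,
          show (j:ℕ) + 1 + 1 - ((i:ℕ) + 1) = (j:ℕ) + 1 - (i:ℕ) by omega,
          if_neg (show ¬((i:ℕ) + 1 = 0) by omega), ite_self]
        split_ifs <;> first | rfl | omega
      have hM1 : (Pm (n+2) a b (ω :: v) s).submatrix (Fin.succAbove 1) Fin.succ
          = Pm (n+1) a b v (ω :: s) := by
        ext i j
        refine Fin.cases ?_ ?_ i
        · have hrow : ((Fin.succAbove 1 (0 : Fin (n+1)) : Fin (n+2)) : ℕ) = 0 := by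
            simp [Fin.succAbove]
          simp only [Matrix.submatrix_apply, Pm, Matrix.of_apply, hrow, Fin.val_succ,
            Fin.val_zero, Nat.sub_zero, List.drop_zero]
          split_ifs <;> first | rfl | omega | contradiction |
            (rw [List.take_succ_cons, List.reverse_cons, List.append_assoc,
              List.singleton_append])
        · intro i
          have hrow : ((Fin.succAbove 1 (i.succ) : Fin (n+2)) : ℕ) = (i : ℕ) + 2 := by
            simp [Fin.succAbove, Fin.lt_def]
          simp only [Matrix.submatrix_apply, Pm, Matrix.of_apply, hrow, Fin.val_succ]
          rw [show (i:ℕ) + 2 = ((i:ℕ) + 1) + 1 from rfl, List.drop_succ_cons,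
            show (j:ℕ) + 1 + 1 - ((i:ℕ) + 1 + 1) = (j:ℕ) + 1 - ((i:ℕ) + 1) by omega]
          split_ifs <;> first | rfl | omega | contradiction
      simp only [Fin.succ_zero_eq_one]
      rw [hA00, hA10, hM0, hM1]
      have hsum0 : ∑ i : Fin n, (-1:ℝ) ^ ((i.succ.succ : Fin (n+2)) : ℕ) *
          Pm (n+2) a b (ω :: v) s i.succ.succ 0 *
          ((Pm (n+2) a b (ω :: v) s).submatrix (Fin.succAbove i.succ.succ) Fin.succ).det = 0 := by
        apply Finset.sum_eq_zero
        intro i _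
        rw [hAi0 i]
        ring
      rw [hsum0, add_zero]
      rw [ih v hv' [] hcont', ih v hv' (ω :: s) hcont']
      have hsa := sum_antipode v hcont' (by rintro rfl; simp at hv') a b
      rw [hv'] at hsa
      simp only [List.append_nil]
      rw [hsa]
      have key : ∑ k ∈ Finset.range (n+1+1), (-1:ℝ)^k *
            (chen ((List.take (k+1) (ω::v)).reverse ++ s) a b *
              chen (List.drop (k+1) (ω::v)) a b)
          = chen (ω::s) a b * chen v a b +
            (-1) * ∑ k ∈ Finset.range (n+1), (-1:ℝ)^k *
              (chen ((List.take (k+1) v).reverse ++ ω::s) a b *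
                chen (List.drop (k+1) v) a b) := by
        rw [Finset.sum_range_succ', add_comm, Finset.mul_sum]
        congr 1
        · simp [List.take_succ_cons]
        · apply Finset.sum_congr rfl
          intro k _
          rw [List.take_succ_cons, List.reverse_cons, List.append_assoc, List.singleton_append,
            List.drop_succ_cons, pow_succ]
          ring
      rw [key]
      simp only [Fin.val_zero, Fin.val_one, pow_zero, pow_one]
      ring

/-- The determinant of the matrix with `a_{ii} = L_{ω_i}^{[a,b]}`, `a_{i,i+1} = 1`,
`a_{ij} = 0` for `j > i+1` and `a_{ij} = L_{ω_j ω_{j+1} … ω_i}^{[a,b]}` for `j < i`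
equals `L_{ωₙ ω_{n-1} … ω₁}^{[a,b]}`. -/
theorem det_chen_matrix (n : ℕ) (ω : Fin n → ℝ → ℝ) (hω : ∀ i, ContDiff ℝ (⊤ : ℕ∞) (ω i)) (a b : ℝ) :
    Matrix.det (Matrix.of fun i j : Fin n =>
      if (j : ℕ) = (i : ℕ) + 1 then (1 : ℝ)
      else if (i : ℕ) + 1 < (j : ℕ) then 0
      else chen (((List.finRange n).filter
          (fun t : Fin n => decide ((j : ℕ) ≤ t.val ∧ t.val ≤ (i : ℕ)))).map ω) a b)
      = chen ((List.finRange n).map ω).reverse a b := by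
  classical
  set w : List (ℝ → ℝ) := (List.finRange n).map ω with hw
  have hlen : w.length = n := by simp [hw]
  have hcontw : ∀ f ∈ w.reverse, Continuous f := by
    intro f hf
    simp only [hw, List.mem_reverse, List.mem_map] at hf
    obtain ⟨i, _, rfl⟩ := hf
    exact (hω i).continuous
  rw [← Matrix.det_submatrix_equiv_self Fin.revPerm]
  have hEq : (Matrix.of fun i j : Fin n =>
      if (j : ℕ) = (i : ℕ) + 1 then (1 : ℝ)
      else if (i : ℕ) + 1 < (j : ℕ) then 0
      else chen (((List.finRange n).filter
          (fun t : Fin n => decide ((j : ℕ) ≤ t.val ∧ t.val ≤ (i : ℕ)))).map ω) a b).submatrix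
        ⇑Fin.revPerm ⇑Fin.revPerm = Pm n a b w.reverse [] := by
    ext i j
    have hri : ((Fin.rev i : Fin n) : ℕ) = n - 1 - (i : ℕ) := by rw [Fin.val_rev]; omega
    have hrj : ((Fin.rev j : Fin n) : ℕ) = n - 1 - (j : ℕ) := by rw [Fin.val_rev]; omega
    simp only [Matrix.submatrix_apply, Matrix.of_apply, Pm, Fin.revPerm_apply, hri, hrj]
    have hi := i.isLt
    have hj := j.isLt
    split_ifs <;> first | rfl | omega | skip
    -- remaining: the chen entries
    all_goals {
      rename_i h1 h2 h3 h4
      have hij : (i : ℕ) ≤ (j : ℕ) := by omega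
      rw [filter_finRange n (n - 1 - (j:ℕ)) (n - 1 - (i:ℕ)) (by omega) (by omega),
        List.map_take, List.map_drop, ← hw, List.append_nil,
        reverse_slice w (i : ℕ) (j : ℕ) hij (by rw [hlen]; exact hj), hlen,
        show n - 1 - (i:ℕ) + 1 - (n - 1 - (j:ℕ)) = (j:ℕ) + 1 - (i:ℕ) by omega]
    }
  rw [hEq]
  cases n with
  | zero =>
    rw [Matrix.det_fin_zero]
    have hw0 : w = [] := by simp [hw]
    rw [hw0]
    rfl
  | succ m =>
    rw [detPm a b m w.reverse (by rw [List.length_reverse, hlen]) [] hcontw]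
    simp only [List.append_nil]
    have hne : w.reverse ≠ [] := by
      intro h
      have : w.reverse.length = 0 := by rw [h]; rfl
      rw [List.length_reverse, hlen] at this
      omega
    have hsa := sum_antipode w.reverse hcontw hne a b
    rw [List.length_reverse, hlen] at hsa
    rw [hsa]
end

section
/- Let ω₁,…,ωₙ be smooth functions and let φ(t) = (L_{ω₁}^{[a,t]}, L_{ω₁ω₂}^{[a,t]}, …, L_{ω₁ω₂…ωₙ}^{[a,t]})ᵀ ∈ ℝⁿ. Then det(φ(t), φ'(t), …, φ^{(n-1)}(t)) = ω₁(t)^{n-1} ω₂(t)^{n-2} ⋯ ω_{n-1}(t) · L_{ωₙω_{n-1}…ω₁}^{[a,t]}. -/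
section Aux
open scoped ContDiff

theorem chen_hasDerivAt' (a : ℝ) (f : ℝ → ℝ) (l : List (ℝ → ℝ))
    (hf : Continuous f) (hl : Continuous (chen l a)) (t : ℝ) :
    HasDerivAt (chen (f :: l) a) (f t * chen l a t) t := by
  have hcont : Continuous (fun s => f s * chen l a s) := hf.mul hl
  have : HasDerivAt (fun b => ∫ s in a..b, f s * chen l a s) (f t * chen l a t) t :=
    intervalIntegral.integral_hasDerivAt_right (hcont.intervalIntegrable _ _)
      (hcont.stronglyMeasurableAtFilter _ _) hcont.continuousAt
  have he : chen (f :: l) a = fun b => ∫ s in a..b, f s * chen l a s := by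
    funext b; simp [chen]
  rw [he]; exact this

theorem chen_contDiff (a : ℝ) : ∀ (l : List (ℝ → ℝ)), (∀ f ∈ l, ContDiff ℝ ∞ f) →
    ContDiff ℝ ∞ (chen l a)
  | [], _ => by simpa [chen] using contDiff_const
  | f :: l, h => by
    have hf : ContDiff ℝ ∞ f := h f (List.mem_cons_self)
    have hl : ContDiff ℝ ∞ (chen l a) := chen_contDiff a l fun g hg => h g (List.mem_cons_of_mem _ hg)
    have hd : ∀ t, HasDerivAt (chen (f :: l) a) (f t * chen l a t) t :=
      chen_hasDerivAt' a f l hf.continuous hl.continuous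
    rw [contDiff_infty_iff_deriv]
    refine ⟨fun t => (hd t).differentiableAt, ?_⟩
    have : deriv (chen (f :: l) a) = fun t => f t * chen l a t := funext fun t => (hd t).deriv
    rw [this]
    exact hf.mul hl

theorem chen_hasDerivAt_s4 (a : ℝ) (f : ℝ → ℝ) (l : List (ℝ → ℝ))
    (h : ∀ g ∈ l, ContDiff ℝ ∞ g) (hf : Continuous f) (t : ℝ) :
    HasDerivAt (chen (f :: l) a) (f t * chen l a t) t :=
  chen_hasDerivAt' a f l hf (chen_contDiff a l h).continuous t

theorem chen_same (l : List (ℝ → ℝ)) (hl : l ≠ []) (a : ℝ) : chen l a a = 0 := by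
  cases l with
  | nil => exact absurd rfl hl
  | cons f l => simp [chen]

noncomputable def wfun (l : List (ℝ → ℝ)) (a : ℝ) (j i : ℕ) (t : ℝ) : ℝ :=
  if j ≤ i + 1 then chen ((l.drop j).take (i + 1 - j)) a t else 0

theorem wfun_contDiff (l : List (ℝ → ℝ)) (a : ℝ) (h : ∀ f ∈ l, ContDiff ℝ ∞ f) (j i : ℕ) :
    ContDiff ℝ ∞ (wfun l a j i) := by
  unfold wfun
  split
  · exact chen_contDiff a _ fun f hf =>
      h f (List.mem_of_mem_drop (List.mem_of_mem_take hf))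
  · exact contDiff_const

theorem wfun_hasDerivAt (l : List (ℝ → ℝ)) (a : ℝ) (h : ∀ f ∈ l, ContDiff ℝ ∞ f)
    (j i : ℕ) (t : ℝ) :
    HasDerivAt (wfun l a j i) ((l.getD j (fun _ => 0)) t * wfun l a (j + 1) i t) t := by
  rcases le_or_gt j i with hji | hji
  · rcases lt_or_ge j l.length with hjl | hjl
    · -- main case: nonempty list
      have hsplit : (l.drop j).take (i + 1 - j)
          = l.getD j (fun _ => 0) :: ((l.drop (j + 1)).take (i - j)) := by
        rw [List.drop_eq_getElem_cons hjl, List.getD_eq_getElem l _ hjl]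
        have : i + 1 - j = (i - j) + 1 := by omega
        rw [this, List.take_succ_cons]
      have h1 : wfun l a j i = chen (l.getD j (fun _ => 0) :: ((l.drop (j + 1)).take (i - j))) a := by
        funext s
        rw [wfun, if_pos (by omega), hsplit]
      have h2 : wfun l a (j + 1) i t = chen ((l.drop (j + 1)).take (i - j)) a t := by
        rw [wfun, if_pos (by omega)]
        congr 2
        omega
      rw [h1, h2]
      exact chen_hasDerivAt_s4 a _ _
        (fun g hg => h g (List.mem_of_mem_drop (List.mem_of_mem_take hg)))
        ((h _ (by rw [List.getD_eq_getElem _ _ hjl]; exact List.getElem_mem hjl)).continuous) t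
    · -- j beyond list: wfun is constant 1, getD is 0
      have h1 : wfun l a j i = fun _ => 1 := by
        funext s
        rw [wfun, if_pos (by omega), List.drop_eq_nil_of_le hjl]
        simp [chen]
      have h2 : l.getD j (fun _ => 0) = fun _ => 0 := List.getD_eq_default _ _ hjl
      rw [h1, h2]
      simpa using hasDerivAt_const t (1 : ℝ)
  · rcases eq_or_lt_of_le (Nat.succ_le_of_lt hji) with hji' | hji'
    · -- j = i + 1 : wfun j i = chen [] = 1, wfun (j+1) i = 0
      have h1 : wfun l a j i = fun _ => 1 := by
        funext s
        rw [wfun, if_pos (le_of_eq hji'.symm)]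
        rw [← hji']
        simp [chen]
      have h2 : wfun l a (j + 1) i t = 0 := by
        rw [wfun, if_neg (by omega)]
      rw [h1, h2, mul_zero]
      exact hasDerivAt_const t 1
    · -- j > i + 1
      have h1 : wfun l a j i = fun _ => 0 := by
        funext s; rw [wfun, if_neg (by omega)]
      have h2 : wfun l a (j + 1) i t = 0 := by
        rw [wfun, if_neg (by omega)]
      rw [h1, h2, mul_zero]
      exact hasDerivAt_const t 0

theorem wfun_zero (l : List (ℝ → ℝ)) (a : ℝ) (i : ℕ) (t : ℝ) :
    wfun l a 0 i t = chen (l.take (i + 1)) a t := by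
  simp [wfun]

noncomputable def coeff (l : List (ℝ → ℝ)) : ℕ → ℕ → ℝ → ℝ
  | 0, j => if j = 0 then fun _ => 1 else fun _ => 0
  | k + 1, 0 => deriv (coeff l k 0)
  | k + 1, j + 1 => fun t =>
      deriv (coeff l k (j + 1)) t + (l.getD j (fun _ => 0)) t * coeff l k j t

theorem getD_contDiff (l : List (ℝ → ℝ)) (h : ∀ f ∈ l, ContDiff ℝ ∞ f) (j : ℕ) :
    ContDiff ℝ ∞ (l.getD j (fun _ => 0)) := by
  rcases lt_or_ge j l.length with hj | hj
  · rw [List.getD_eq_getElem _ _ hj]; exact h _ (List.getElem_mem hj)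
  · rw [List.getD_eq_default _ _ hj]; exact contDiff_const

theorem coeff_contDiff (l : List (ℝ → ℝ)) (h : ∀ f ∈ l, ContDiff ℝ ∞ f) :
    ∀ k j, ContDiff ℝ ∞ (coeff l k j) := by
  intro k
  induction k with
  | zero =>
    intro j
    unfold coeff; split <;> exact contDiff_const
  | succ k ih =>
    intro j
    match j with
    | 0 => exact (contDiff_infty_iff_deriv.mp (ih 0)).2
    | j + 1 =>
      exact ((contDiff_infty_iff_deriv.mp (ih (j+1))).2).add
        ((getD_contDiff l h j).mul (ih j))

theorem coeff_eq_zero (l : List (ℝ → ℝ)) : ∀ k j, k < j → coeff l k j = fun _ => 0 := by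
  intro k
  induction k with
  | zero =>
    intro j hj
    unfold coeff
    rw [if_neg (by omega)]
  | succ k ih =>
    intro j hj
    match j, hj with
    | j + 1, hj =>
      show (fun t => deriv (coeff l k (j + 1)) t + (l.getD j (fun _ => 0)) t * coeff l k j t) = _
      rw [ih (j+1) (by omega), ih j (by omega)]
      funext t
      simp

theorem coeff_diag (l : List (ℝ → ℝ)) :
    ∀ k, coeff l k k = fun t => ∏ j ∈ Finset.range k, (l.getD j (fun _ => 0)) t := by
  intro k
  induction k with
  | zero => simp [coeff]
  | succ k ih =>
    show (fun t => deriv (coeff l k (k + 1)) t + (l.getD k (fun _ => 0)) t * coeff l k k t) = _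
    rw [coeff_eq_zero l k (k+1) (by omega), ih]
    funext t
    simp [Finset.prod_range_succ, mul_comm]

theorem iteratedDeriv_wfun (l : List (ℝ → ℝ)) (a : ℝ) (h : ∀ f ∈ l, ContDiff ℝ ∞ f)
    (i : ℕ) : ∀ k, iteratedDeriv k (wfun l a 0 i)
      = fun t => ∑ j ∈ Finset.range (k + 1), coeff l k j t * wfun l a j i t := by
  intro k
  induction k with
  | zero =>
    rw [iteratedDeriv_zero]
    funext t
    simp [coeff]
  | succ k ih =>
    rw [iteratedDeriv_succ, ih]
    funext t
    have hterm : ∀ j, HasDerivAt (fun s => coeff l k j s * wfun l a j i s)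
        (deriv (coeff l k j) t * wfun l a j i t
          + coeff l k j t * ((l.getD j (fun _ => 0)) t * wfun l a (j + 1) i t)) t := by
      intro j
      exact ((coeff_contDiff l h k j).differentiable (by simp)).differentiableAt.hasDerivAt.mul
        (wfun_hasDerivAt l a h j i t)
    have hsum : HasDerivAt (fun s => ∑ j ∈ Finset.range (k + 1), coeff l k j s * wfun l a j i s)
        (∑ j ∈ Finset.range (k + 1), (deriv (coeff l k j) t * wfun l a j i t
          + coeff l k j t * ((l.getD j (fun _ => 0)) t * wfun l a (j + 1) i t))) t :=
      HasDerivAt.fun_sum fun j _ => hterm j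
    rw [hsum.deriv]
    rw [Finset.sum_add_distrib]
    -- first sum: extend to range (k+2) shape
    have e1 : ∑ j ∈ Finset.range (k + 1), deriv (coeff l k j) t * wfun l a j i t
        = deriv (coeff l k 0) t * wfun l a 0 i t
          + ∑ j ∈ Finset.range (k + 1), deriv (coeff l k (j + 1)) t * wfun l a (j + 1) i t := by
      rw [Finset.sum_range_succ' _ k, Finset.sum_range_succ]
      rw [coeff_eq_zero l k (k + 1) (by omega)]
      simp [add_comm]
    rw [e1]
    rw [Finset.sum_range_succ' _ (k + 1)]
    have e2 : ∀ j, coeff l (k + 1) (j + 1) t * wfun l a (j + 1) i t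
        = deriv (coeff l k (j + 1)) t * wfun l a (j + 1) i t
          + coeff l k j t * ((l.getD j (fun _ => 0)) t * wfun l a (j + 1) i t) := by
      intro j
      show (deriv (coeff l k (j + 1)) t + (l.getD j (fun _ => 0)) t * coeff l k j t) * _ = _
      ring
    have e3 : coeff l (k + 1) 0 t * wfun l a 0 i t = deriv (coeff l k 0) t * wfun l a 0 i t := rfl
    simp only [e2, e3, Finset.sum_add_distrib]
    ring

open Equiv in
theorem hasDerivAt_det {n : ℕ} (A : ℝ → Matrix (Fin n) (Fin n) ℝ)
    (A' : Matrix (Fin n) (Fin n) ℝ) (t : ℝ)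
    (h : ∀ i j, HasDerivAt (fun s => A s i j) (A' i j) t) :
    HasDerivAt (fun s => (A s).det)
      (∑ j : Fin n, ((A t).updateCol j (fun i => A' i j)).det) t := by
  have key : ∀ σ : Perm (Fin n), HasDerivAt (fun s => ∏ i, A s (σ i) i)
      (∑ k : Fin n, (∏ j ∈ Finset.univ.erase k, A t (σ j) j) * A' (σ k) k) t := by
    intro σ
    have := HasDerivAt.fun_finsetProd (u := Finset.univ) (f := fun i s => A s (σ i) i)
      (f' := fun i => A' (σ i) i) (x := t) (fun i _ => h (σ i) i)
    simpa [smul_eq_mul] using this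
  have hexp : ∀ (M : Matrix (Fin n) (Fin n) ℝ), M.det
      = ∑ σ : Perm (Fin n), ((Equiv.Perm.sign σ : ℤ) : ℝ) * ∏ i, M (σ i) i :=
    fun M => Matrix.det_apply' M
  have H : HasDerivAt
      (fun s => ∑ σ : Perm (Fin n), ((Equiv.Perm.sign σ : ℤ) : ℝ) * ∏ i, A s (σ i) i)
      (∑ σ : Perm (Fin n), ((Equiv.Perm.sign σ : ℤ) : ℝ) *
        ∑ k : Fin n, (∏ j ∈ Finset.univ.erase k, A t (σ j) j) * A' (σ k) k) t :=
    HasDerivAt.fun_sum fun σ _ => (key σ).const_mul _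
  have hfun : (fun s => (A s).det)
      = fun s => ∑ σ : Perm (Fin n), ((Equiv.Perm.sign σ : ℤ) : ℝ) * ∏ i, A s (σ i) i :=
    funext fun s => hexp _
  rw [hfun]
  have heq : (∑ j : Fin n, ((A t).updateCol j fun i => A' i j).det)
      = ∑ σ : Perm (Fin n), ((Equiv.Perm.sign σ : ℤ) : ℝ) *
          ∑ k : Fin n, (∏ j ∈ Finset.univ.erase k, A t (σ j) j) * A' (σ k) k := by
    simp only [hexp, Finset.mul_sum]
    rw [Finset.sum_comm]
    refine Finset.sum_congr rfl fun σ _ => Finset.sum_congr rfl fun k _ => ?_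
    congr 1
    rw [← Finset.mul_prod_erase Finset.univ _ (Finset.mem_univ k)]
    rw [Matrix.updateCol_self, mul_comm]
    congr 1
    refine Finset.prod_congr rfl fun i hi => ?_
    rw [Matrix.updateCol_ne (Finset.ne_of_mem_erase hi)]
  rw [heq]
  exact H

theorem eq_of_hasDerivAt_eq' {F G d : ℝ → ℝ} (hF : ∀ s, HasDerivAt F (d s) s)
    (hG : ∀ s, HasDerivAt G (d s) s) (a : ℝ) (h : F a = G a) (t : ℝ) : F t = G t := by
  have hdiff : ∀ s, HasDerivAt (fun u => F u - G u) 0 s := fun s => by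
    simpa using (hF s).fun_sub (hG s)
  have hc := is_const_of_deriv_eq_zero (f := fun u => F u - G u)
    (fun s => (hdiff s).differentiableAt) (fun s => (hdiff s).deriv) t a
  linarith

theorem wfun_take (l : List (ℝ → ℝ)) (a : ℝ) (n j i : ℕ) (hi : i < n) :
    wfun (l.take n) a j i = wfun l a j i := by
  funext t
  unfold wfun
  by_cases hj : j ≤ i + 1
  · rw [if_pos hj, if_pos hj, List.drop_take, List.take_take, min_eq_left (by omega)]
  · rw [if_neg hj, if_neg hj]

theorem list_eq_take_concat (l : List (ℝ → ℝ)) (n : ℕ) (hlen : l.length = n + 1) :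
    l = l.take n ++ [l.getD n (fun _ => 0)] := by
  conv_lhs => rw [← List.take_append_drop n l]
  congr 1
  rw [List.drop_eq_getElem_cons (by omega), List.getD_eq_getElem _ _ (by omega)]
  rw [List.drop_eq_nil_of_le (by omega)]

theorem det_wfun (a : ℝ) : ∀ (n : ℕ) (l : List (ℝ → ℝ)), l.length = n →
    (∀ f ∈ l, ContDiff ℝ ∞ f) → ∀ t,
    Matrix.det (Matrix.of fun i j : Fin n => wfun l a (j : ℕ) (i : ℕ) t)
      = chen l.reverse a t := by
  intro n
  induction n with
  | zero =>
    intro l hlen _ t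
    rw [List.length_eq_zero_iff] at hlen
    subst hlen
    simp [chen, Matrix.det_fin_zero]
  | succ n ih =>
    intro l hlen hsm t
    have hln : l ≠ [] := by intro h; rw [h] at hlen; simp at hlen
    -- the common derivative
    set g : ℝ → ℝ := fun s => l.getD n (fun _ => 0) s * chen ((l.take n).reverse) a s with hg
    have hsm' : ∀ f ∈ l.take n, ContDiff ℝ ∞ f := fun f hf => hsm f (List.mem_of_mem_take hf)
    -- LHS derivative
    have hD : ∀ s, HasDerivAt
        (fun u => Matrix.det (Matrix.of fun i j : Fin (n+1) => wfun l a (j : ℕ) (i : ℕ) u))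
        (g s) s := by
      intro s
      have hder := hasDerivAt_det
        (fun u => Matrix.of fun i j : Fin (n+1) => wfun l a (j : ℕ) (i : ℕ) u)
        (Matrix.of fun i j : Fin (n+1) =>
          l.getD (j : ℕ) (fun _ => 0) s * wfun l a ((j : ℕ) + 1) (i : ℕ) s) s
        (fun i j => wfun_hasDerivAt l a hsm (j : ℕ) (i : ℕ) s)
      have hsum : (∑ j : Fin (n+1),
          (Matrix.updateCol (Matrix.of fun i j : Fin (n+1) => wfun l a (j : ℕ) (i : ℕ) s) j
            (fun i => l.getD (j : ℕ) (fun _ => 0) s * wfun l a ((j : ℕ) + 1) (i : ℕ) s)).det)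
          = g s := by
        rw [Finset.sum_eq_single (Fin.last n)]
        · -- the last column term
          set B := Matrix.of fun i j : Fin (n+1) => wfun l a (j : ℕ) (i : ℕ) s with hB
          have hcol : (fun i : Fin (n+1) =>
              l.getD ((Fin.last n : Fin (n+1)) : ℕ) (fun _ => 0) s * wfun l a (((Fin.last n : Fin (n+1)) : ℕ) + 1) (i : ℕ) s)
              = fun i => if i = Fin.last n then l.getD n (fun _ => 0) s else 0 := by
            funext i
            simp only [Fin.val_last]
            by_cases hi : i = Fin.last n
            · subst hi
              have : wfun l a (n + 1) n s = 1 := by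
                rw [wfun, if_pos (by omega)]
                have : n + 1 - (n + 1) = 0 := by omega
                rw [this]
                simp [chen]
              rw [if_pos rfl, Fin.val_last, this, mul_one]
            · have hne : (i : ℕ) ≠ n := fun h => hi (Fin.ext (by simp [h, Fin.val_last]))
              have hilt : (i : ℕ) < n := by have := i.isLt; omega
              have : wfun l a (n + 1) (i : ℕ) s = 0 := by
                rw [wfun, if_neg (by omega)]
              rw [this, mul_zero, if_neg hi]
          rw [hcol]
          rw [Matrix.det_succ_column _ (Fin.last n)]
          rw [Finset.sum_eq_single (Fin.last n)]
          · rw [Matrix.updateCol_self, if_pos rfl]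
            have hmin : (Matrix.updateCol B (Fin.last n)
                  (fun i => if i = Fin.last n then l.getD n (fun _ => 0) s else 0)).submatrix
                  (Fin.last n).succAbove (Fin.last n).succAbove
                = Matrix.of fun i j : Fin n => wfun (l.take n) a (j : ℕ) (i : ℕ) s := by
              ext i j
              rw [Fin.succAbove_last]
              simp only [Matrix.submatrix_apply]
              rw [Matrix.updateCol_ne (by simp [Fin.ext_iff]; omega)]
              simp only [hB, Matrix.of_apply]
              rw [wfun_take l a n (j : ℕ) (i : ℕ) (by omega)]
              simp
            rw [hmin, ih (l.take n) (by simp [hlen]) hsm' s]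
            rw [Fin.val_last, Even.neg_one_pow ⟨n, rfl⟩, one_mul, hg]
          · intro i _ hi
            rw [Matrix.updateCol_self, if_neg hi, mul_zero, zero_mul]
          · intro h; exact absurd (Finset.mem_univ _) h
        · intro j _ hj
          set B := Matrix.of fun i j : Fin (n+1) => wfun l a (j : ℕ) (i : ℕ) s with hB
          have hjlt : (j : ℕ) < n := by
            have := j.isLt
            have : j ≠ Fin.last n := hj
            simp [Fin.ext_iff, Fin.val_last] at this
            omega
          have hcol : (fun i : Fin (n+1) => l.getD (j : ℕ) (fun _ => 0) s * wfun l a ((j : ℕ) + 1) (i : ℕ) s)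
              = l.getD (j : ℕ) (fun _ => 0) s • (fun i => B i ⟨(j : ℕ) + 1, by omega⟩) := by
            funext i
            simp [hB]
          rw [hcol, Matrix.det_updateCol_smul,
            Matrix.det_updateCol_eq_zero (i := (⟨(j : ℕ) + 1, by omega⟩ : Fin (n+1)))
              (by simp [Fin.ext_iff]), mul_zero]
        · intro h; exact absurd (Finset.mem_univ _) h
      simp only [Matrix.of_apply] at hder
      rw [hsum] at hder
      exact hder
    -- RHS derivative
    have hrev : l.reverse = l.getD n (fun _ => 0) :: (l.take n).reverse := by
      conv_lhs => rw [list_eq_take_concat l n hlen]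
      rw [List.reverse_append]
      simp
    have hC : ∀ s, HasDerivAt (fun u => chen l.reverse a u) (g s) s := by
      intro s
      rw [hrev]
      exact chen_hasDerivAt_s4 a _ _ (fun f hf => hsm' f (List.mem_reverse.mp hf))
        (getD_contDiff l hsm n).continuous s
    -- equality at a
    have hFa : Matrix.det (Matrix.of fun i j : Fin (n+1) => wfun l a (j : ℕ) (i : ℕ) a) = 0 := by
      apply Matrix.det_eq_zero_of_column_eq_zero 0
      intro i
      simp only [Matrix.of_apply, Fin.val_zero]
      rw [wfun_zero]
      exact chen_same _ (by simp [hln]) a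
    have hGa : chen l.reverse a a = 0 := chen_same _ (by simp [hln]) a
    exact eq_of_hasDerivAt_eq' hD hC a (by rw [hFa, hGa]) t

theorem iteratedDeriv_pi_apply {n : ℕ} (F : ℝ → Fin n → ℝ)
    (h : ∀ i, ContDiff ℝ ∞ (fun t => F t i)) (k : ℕ) :
    iteratedDeriv k F = fun t i => iteratedDeriv k (fun t => F t i) t := by
  induction k with
  | zero => simp [iteratedDeriv_zero]
  | succ k ihk =>
    rw [iteratedDeriv_succ, ihk]
    funext t
    have hd : HasDerivAt (fun t => fun i => iteratedDeriv k (fun t => F t i) t)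
        (fun i => deriv (iteratedDeriv k (fun t => F t i)) t) t := by
      rw [hasDerivAt_pi]
      intro i
      exact (((h i).differentiable_iteratedDeriv k
        (by exact_mod_cast ENat.coe_lt_top k)) t).hasDerivAt
    rw [hd.deriv]
    funext i
    rw [iteratedDeriv_succ]

theorem prod_prod_range {x : ℕ → ℝ} : ∀ n : ℕ,
    ∏ k ∈ Finset.range n, ∏ j ∈ Finset.range k, x j
      = ∏ j ∈ Finset.range n, x j ^ (n - 1 - j) := by
  intro n
  induction n with
  | zero => simp
  | succ n ihn =>
    rw [Finset.prod_range_succ, ihn, ← Finset.prod_mul_distrib]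
    rw [Finset.prod_range_succ]
    have hn : n + 1 - 1 - n = 0 := by omega
    rw [hn, pow_zero, mul_one]
    refine Finset.prod_congr rfl fun j hj => ?_
    rw [Finset.mem_range] at hj
    rw [← pow_succ]
    congr 1
    omega

end Aux

/-- For `φ(t) = (L_{ω₁}^{[a,t]}, L_{ω₁ω₂}^{[a,t]}, …, L_{ω₁…ωₙ}^{[a,t]})`, the Wronskian-type
determinant `det(φ(t), φ'(t), …, φ^{(n-1)}(t))` equals
`ω₁(t)^{n-1} ω₂(t)^{n-2} ⋯ ω_{n-1}(t) · L_{ωₙω_{n-1}…ω₁}^{[a,t]}`. -/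
theorem det_osculating (n : ℕ) (ω : Fin n → ℝ → ℝ) (hω : ∀ i, ContDiff ℝ (⊤ : ℕ∞) (ω i)) (a t : ℝ) :
    Matrix.det (Matrix.of fun i k : Fin n =>
        iteratedDeriv (k : ℕ)
          (fun s => fun j : Fin n => chen (((List.finRange n).take ((j : ℕ) + 1)).map ω) a s) t i)
      = (∏ i : Fin n, ω i t ^ (n - 1 - (i : ℕ))) * chen ((List.finRange n).map ω).reverse a t := by
  set l : List (ℝ → ℝ) := (List.finRange n).map ω with hl
  have hlen : l.length = n := by simp [hl]
  have hsm : ∀ f ∈ l, ContDiff ℝ ((⊤ : ℕ∞) : WithTop ℕ∞) f := by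
    intro f hf
    rw [hl, List.mem_map] at hf
    obtain ⟨i, _, rfl⟩ := hf
    exact (hω i).of_le (by simp)
  have hlists : ∀ j : Fin n, ((List.finRange n).take ((j : ℕ) + 1)).map ω = l.take ((j : ℕ) + 1) := by
    intro j
    rw [hl, List.map_take]
  -- rewrite matrix entries
  have hF : (fun s => fun j : Fin n => chen (((List.finRange n).take ((j : ℕ) + 1)).map ω) a s)
      = fun s => fun j : Fin n => wfun l a 0 (j : ℕ) s := by
    funext s j
    rw [hlists j, ← wfun_zero]
  have hMentry : ∀ (i k : Fin n),
      iteratedDeriv (k : ℕ)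
        (fun s => fun j : Fin n => chen (((List.finRange n).take ((j : ℕ) + 1)).map ω) a s) t i
      = ∑ j ∈ Finset.range ((k : ℕ) + 1), coeff l (k : ℕ) j t * wfun l a j (i : ℕ) t := by
    intro i k
    rw [hF, iteratedDeriv_pi_apply _ (fun j => wfun_contDiff l a hsm 0 (j : ℕ)) (k : ℕ)]
    show iteratedDeriv (k : ℕ) (wfun l a 0 (i : ℕ)) t = _
    rw [iteratedDeriv_wfun l a hsm (i : ℕ) (k : ℕ)]
  have hM : (Matrix.of fun i k : Fin n =>
      iteratedDeriv (k : ℕ)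
        (fun s => fun j : Fin n => chen (((List.finRange n).take ((j : ℕ) + 1)).map ω) a s) t i)
      = (Matrix.of fun i j : Fin n => wfun l a (j : ℕ) (i : ℕ) t)
        * (Matrix.of fun j k : Fin n => coeff l (k : ℕ) (j : ℕ) t) := by
    ext i k
    rw [Matrix.mul_apply, Matrix.of_apply, hMentry i k]
    simp only [Matrix.of_apply]
    rw [Fin.sum_univ_eq_sum_range (fun j => wfun l a j (i : ℕ) t * coeff l (k : ℕ) j t) n]
    rw [← Finset.sum_subset (Finset.range_subset_range.mpr (by omega : (k : ℕ) + 1 ≤ n))]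
    · exact Finset.sum_congr rfl fun j _ => mul_comm _ _
    · intro j _ hj
      rw [Finset.mem_range, not_lt] at hj
      rw [coeff_eq_zero l (k : ℕ) j (by omega)]
      simp
  rw [hM, Matrix.det_mul]
  -- determinant of W
  have hW := det_wfun a n l hlen hsm t
  rw [hW]
  -- determinant of C : upper triangular
  have hC : (Matrix.of fun j k : Fin n => coeff l (k : ℕ) (j : ℕ) t).det
      = ∏ i : Fin n, ω i t ^ (n - 1 - (i : ℕ)) := by
    rw [Matrix.det_of_upperTriangular (M := Matrix.of fun j k : Fin n => coeff l (k : ℕ) (j : ℕ) t)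
      (fun i j hij => by
        simp only [Matrix.of_apply]
        rw [coeff_eq_zero l (j : ℕ) (i : ℕ) hij])]
    rw [show (∏ i : Fin n, (Matrix.of fun j k : Fin n => coeff l (k : ℕ) (j : ℕ) t) i i)
        = ∏ i : Fin n, ∏ j ∈ Finset.range (i : ℕ), (l.getD j (fun _ => 0)) t from
      Finset.prod_congr rfl fun i _ => by
        show coeff l (i : ℕ) (i : ℕ) t = _
        rw [coeff_diag]]
    rw [Fin.prod_univ_eq_prod_range (fun k => ∏ j ∈ Finset.range k, (l.getD j (fun _ => 0)) t) n]
    rw [prod_prod_range]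
    rw [← Fin.prod_univ_eq_prod_range (fun j => (l.getD j (fun _ => 0)) t ^ (n - 1 - j)) n]
    refine Finset.prod_congr rfl fun i _ => ?_
    congr 1
    rw [List.getD_eq_getElem _ _ (by omega : (i : ℕ) < l.length)]
    have : l[(i : ℕ)] = ω i := by
      simp only [hl, List.getElem_map, List.getElem_finRange, Fin.cast_mk, Fin.eta]
    rw [this]
  rw [hC, mul_comm, hl]
end

section
/- For the staircase partition λ = (nl, (n−1)l, …, l) of length n, the Schur polynomial in n+1 variables factorizes as S_λ(u₁,…,u_{n+1}) = Π_{1≤i<j≤n+1} (u_i^{l+1} − u_j^{l+1})/(u_i − u_j). -/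
/-- Complete homogeneous symmetric polynomial of degree `m` in `n` real variables. -/
noncomputable def hh (n m : ℕ) (u : Fin n → ℝ) : ℝ :=
  ∑ c ∈ Finset.Nat.antidiagonalTuple n m, ∏ i, u i ^ c i

/-- `hh` extended by `0` to negative degrees. -/
noncomputable def hZ (n : ℕ) (m : ℤ) (u : Fin n → ℝ) : ℝ :=
  if 0 ≤ m then hh n m.toNat u else 0

/-- Schur polynomial of the partition `lam` (of length at most `l`), evaluated at `k`
real variables, defined via the Jacobi–Trudi determinant. -/
noncomputable def schur {l : ℕ} (lam : Fin l → ℕ) {k : ℕ} (u : Fin k → ℝ) : ℝ :=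
  Matrix.det (Matrix.of fun i j : Fin l => hZ k ((lam i : ℤ) - (i : ℤ) + (j : ℤ)) u)

open Finset

noncomputable def ee {k : ℕ} (u : Fin k → ℝ) (s : Finset (Fin k)) (r : ℕ) : ℝ :=
  ∑ t ∈ s.powersetCard r, ∏ i ∈ t, u i

noncomputable def HS {k : ℕ} (u : Fin k → ℝ) (A : Finset (Fin k)) (m : ℤ) : ℝ :=
  if 0 ≤ m then
    ∑ c ∈ (Finset.Nat.antidiagonalTuple k m.toNat).filter (fun c => ∀ i, i ∉ A → c i = 0),
      ∏ i, u i ^ c i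
  else 0

lemma HS_univ {k : ℕ} (u : Fin k → ℝ) (m : ℤ) : HS u univ m = hZ k m u := by
  unfold HS hZ hh
  simp

lemma HS_neg {k : ℕ} (u : Fin k → ℝ) (A : Finset (Fin k)) {m : ℤ} (hm : m < 0) :
    HS u A m = 0 := by
  unfold HS; rw [if_neg (not_le.mpr hm)]

lemma HS_zero' {k : ℕ} (u : Fin k → ℝ) (A : Finset (Fin k)) : HS u A 0 = 1 := by
  unfold HS
  rw [if_pos le_rfl]
  have : (Finset.Nat.antidiagonalTuple k (0:ℤ).toNat).filter
      (fun c => ∀ i, i ∉ A → c i = 0) = {0} := by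
    rw [Int.toNat_zero, Finset.Nat.antidiagonalTuple_zero_right]
    ext c; simp +contextual [Finset.mem_filter]
  rw [this]; simp

lemma ee_zero {k : ℕ} (u : Fin k → ℝ) (s : Finset (Fin k)) : ee u s 0 = 1 := by
  simp [ee]

lemma ee_of_card_lt {k : ℕ} (u : Fin k → ℝ) {s : Finset (Fin k)} {r : ℕ}
    (h : s.card < r) : ee u s r = 0 := by
  simp [ee, Finset.powersetCard_eq_empty.mpr h]

lemma ee_insert {k : ℕ} (u : Fin k → ℝ) {s : Finset (Fin k)} {x : Fin k} (hx : x ∉ s) (r : ℕ) :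
    ee u (insert x s) (r + 1) = ee u s (r + 1) + u x * ee u s r := by
  unfold ee
  rw [Finset.powersetCard_succ_insert hx, Finset.sum_union, Finset.sum_image, Finset.mul_sum]
  · congr 1
    refine Finset.sum_congr rfl fun t ht => ?_
    rw [Finset.prod_insert]
    intro hxt
    exact hx ((Finset.mem_powersetCard.mp ht).1 hxt)
  · intro t₁ h₁ t₂ h₂ h
    have hx₁ : x ∉ t₁ := fun hc => hx ((Finset.mem_powersetCard.mp h₁).1 hc)
    have hx₂ : x ∉ t₂ := fun hc => hx ((Finset.mem_powersetCard.mp h₂).1 hc)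
    rw [← Finset.erase_insert hx₁, ← Finset.erase_insert hx₂, h]
  · rw [Finset.disjoint_right]
    rintro t ht hts
    simp only [Finset.mem_image] at ht
    obtain ⟨t', ht', rfl⟩ := ht
    have : x ∈ s := (Finset.mem_powersetCard.mp hts).1 (Finset.mem_insert_self x t')
    exact hx this

lemma HS_erase {k : ℕ} (u : Fin k → ℝ) {A : Finset (Fin k)} {x : Fin k} (hx : x ∈ A) (m : ℤ) :
    HS u A m = HS u (A.erase x) m + u x * HS u A (m - 1) := by
  rcases lt_trichotomy m 0 with hm | rfl | hm
  · rw [HS_neg u _ hm, HS_neg u _ hm, HS_neg u _ (by omega)]; ring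
  · rw [HS_zero', HS_zero', HS_neg u _ (by norm_num)]; ring
  · have h1 : (0:ℤ) ≤ m := le_of_lt hm
    have h2 : (0:ℤ) ≤ m - 1 := by omega
    unfold HS
    rw [if_pos h1, if_pos h1, if_pos h2]
    set N := m.toNat with hN
    have hmN : (m - 1).toNat = N - 1 := by omega
    have hN1 : 1 ≤ N := by omega
    rw [hmN]
    rw [← Finset.sum_filter_add_sum_filter_not
      ((Finset.Nat.antidiagonalTuple k N).filter (fun c => ∀ i, i ∉ A → c i = 0))
      (fun c => c x = 0)]
    congr 1
    · -- c x = 0 piece equals the erase piece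
      apply Finset.sum_congr _ (fun _ _ => rfl)
      rw [Finset.filter_filter]
      apply Finset.filter_congr
      intro c _
      simp only [Finset.mem_erase]
      constructor
      · rintro ⟨h, hx0⟩ i hi
        by_cases hix : i = x
        · subst hix; exact hx0
        · exact h i (fun hiA => hi ⟨hix, hiA⟩)
      · intro h
        refine ⟨fun i hi => h i (fun hc => hi hc.2), h x (fun hc => hc.1 rfl)⟩
    · -- c x ≠ 0 piece
      rw [Finset.mul_sum]
      refine Finset.sum_nbij' (fun c => Function.update c x (c x - 1))
        (fun d => Function.update d x (d x + 1)) ?_ ?_ ?_ ?_ ?_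
      · intro c hc
        simp only [Finset.mem_filter, Finset.Nat.mem_antidiagonalTuple] at hc ⊢
        obtain ⟨⟨⟨hsum, hsupp⟩, hcx⟩⟩ := And.intro hc trivial
        refine ⟨?_, ?_⟩
        · rw [Finset.sum_update_of_mem (Finset.mem_univ x), Finset.sdiff_singleton_eq_erase]
          rw [← Finset.add_sum_erase _ c (Finset.mem_univ x)] at hsum
          omega
        · intro i hi
          have hix : i ≠ x := fun h => hi (h ▸ hx)
          rw [Function.update_of_ne hix]
          exact hsupp i hi
      · intro d hd
        simp only [Finset.mem_filter, Finset.Nat.mem_antidiagonalTuple] at hd ⊢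
        obtain ⟨hsum, hsupp⟩ := hd
        refine ⟨⟨?_, ?_⟩, ?_⟩
        · rw [Finset.sum_update_of_mem (Finset.mem_univ x), Finset.sdiff_singleton_eq_erase]
          rw [← Finset.add_sum_erase _ d (Finset.mem_univ x)] at hsum
          omega
        · intro i hi
          have hix : i ≠ x := fun h => hi (h ▸ hx)
          rw [Function.update_of_ne hix]
          exact hsupp i hi
        · simp [Function.update_self]
      · intro c hc
        simp only [Finset.mem_filter] at hc
        funext i
        by_cases hix : i = x
        · rw [hix]
          simp only [Function.update_self]
          have hcx2 : c x ≠ 0 := hc.2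
          omega
        · simp [Function.update_of_ne hix]
      · intro d hd
        funext i
        by_cases hix : i = x
        · rw [hix]; simp [Function.update_self]
        · simp [Function.update_of_ne hix]
      · intro c hc
        simp only [Finset.mem_filter] at hc
        have hcx : c x ≠ 0 := hc.2
        beta_reduce
        rw [← Finset.mul_prod_erase _ (fun i => u i ^ c i) (Finset.mem_univ x),
          ← Finset.mul_prod_erase _ (fun i => u i ^ (Function.update c x (c x - 1)) i)
            (Finset.mem_univ x)]
        have h1 : ∀ i ∈ Finset.univ.erase x,
            u i ^ (Function.update c x (c x - 1)) i = u i ^ c i := by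
          intro i hi
          rw [Function.update_of_ne (Finset.mem_erase.mp hi).1]
        rw [Finset.prod_congr rfl h1, Function.update_self, ← mul_assoc,
          ← pow_succ', Nat.sub_add_cancel (by omega)]

lemma key {k : ℕ} (u : Fin k → ℝ) (s : Finset (Fin k)) (m : ℤ) :
    ∑ r ∈ Finset.range (s.card + 1), (-1 : ℝ) ^ r * ee u s r * hZ k (m - r) u
      = HS u sᶜ m := by
  induction s using Finset.induction generalizing m with
  | empty => simp [ee_zero, HS_univ]
  | @insert x s hx ih =>
    rw [Finset.card_insert_of_notMem hx, Finset.sum_range_succ']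
    have esplit : ∀ r ∈ Finset.range (s.card + 1),
        (-1:ℝ)^(r+1) * ee u (insert x s) (r+1) * hZ k (m - (↑(r+1) : ℤ)) u
          = (-1:ℝ)^(r+1) * ee u s (r+1) * hZ k (m - (↑(r+1) : ℤ)) u
            - u x * ((-1:ℝ)^r * ee u s r * hZ k ((m-1) - r) u) := by
      intro r _
      rw [ee_insert u hx]
      have hcast : (m : ℤ) - ((r+1 : ℕ) : ℤ) = (m - 1) - r := by push_cast; ring
      rw [hcast]
      ring
    rw [Finset.sum_congr rfl esplit, Finset.sum_sub_distrib, ← Finset.mul_sum, ih (m - 1)]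
    have e0 : (-1:ℝ)^0 * ee u (insert x s) 0 * hZ k (m - ((0:ℕ) : ℤ)) u
        = (-1:ℝ)^0 * ee u s 0 * hZ k (m - ((0:ℕ) : ℤ)) u := by
      rw [ee_zero, ee_zero]
    rw [e0, sub_add_eq_add_sub,
      ← Finset.sum_range_succ' (fun r => (-1:ℝ)^r * ee u s r * hZ k (m - (r:ℤ)) u) (s.card + 1),
      Finset.sum_range_succ, ee_of_card_lt u (Nat.lt_succ_self _), ih m]
    rw [Finset.compl_insert, HS_erase u (Finset.mem_compl.mpr hx) m]
    ring

lemma HS_singleton {k : ℕ} (u : Fin k → ℝ) (i : Fin k) (m : ℤ) :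
    HS u {i} m = if 0 ≤ m then u i ^ m.toNat else 0 := by
  unfold HS
  split_ifs with hm
  · have hset : (Finset.Nat.antidiagonalTuple k m.toNat).filter
        (fun c => ∀ j, j ∉ ({i} : Finset (Fin k)) → c j = 0)
        = {fun j => if j = i then m.toNat else 0} := by
      ext c
      simp only [Finset.mem_filter, Finset.Nat.mem_antidiagonalTuple, Finset.mem_singleton,
        Finset.notMem_singleton]
      constructor
      · rintro ⟨hsum, hsupp⟩
        funext j
        by_cases hj : j = i
        · subst hj
          rw [if_pos rfl, ← hsum,
            Finset.sum_eq_single j (fun b _ hb => hsupp b hb) (by simp)]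
        · simp [hj, hsupp j hj]
      · rintro rfl
        refine ⟨?_, fun j hj => by simp [hj]⟩
        rw [Finset.sum_eq_single i (fun b _ hb => by simp [hb]) (by simp)]
        simp
    rw [hset, Finset.sum_singleton,
      Finset.prod_eq_single i (fun b _ hb => by simp [hb]) (by simp)]
    simp
  · rfl

lemma star {k : ℕ} (u : Fin (k + 1) → ℝ) (i : Fin (k + 1)) (m : ℤ) :
    ∑ r ∈ Finset.range (k + 1), (-1 : ℝ) ^ r * ee u ({i}ᶜ) r * hZ (k + 1) (m - r) u
      = if 0 ≤ m then u i ^ m.toNat else 0 := by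
  have hc : ({i}ᶜ : Finset (Fin (k + 1))).card = k := by
    rw [Finset.card_compl, Finset.card_singleton, Fintype.card_fin]
    omega
  have := key u ({i}ᶜ) m
  rw [hc, compl_compl, HS_singleton] at this
  exact this

lemma hh_zero (k : ℕ) (u : Fin k → ℝ) : hh k 0 u = 1 := by
  unfold hh
  rw [Finset.Nat.antidiagonalTuple_zero_right]
  simp

lemma mul_id (n : ℕ) (u : Fin (n + 1) → ℝ) (lam : Fin (n + 1) → ℕ) :
    (Matrix.of fun j r : Fin (n + 1) => hZ (n + 1) ((lam j : ℤ) - j + (Fin.rev r : ℕ)) u) *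
      (Matrix.of fun r i : Fin (n + 1) => (-1 : ℝ) ^ (r : ℕ) * ee u ({i}ᶜ) (r : ℕ))
      = Matrix.of fun j i : Fin (n + 1) => u i ^ (lam j + (n - (j : ℕ))) := by
  ext j i
  rw [Matrix.mul_apply, Matrix.of_apply]
  have h := star u i ((lam j + (n - (j : ℕ)) : ℕ) : ℤ)
  rw [if_pos (by positivity), Int.toNat_natCast] at h
  rw [← h,
    ← Fin.sum_univ_eq_sum_range
      (fun r => (-1 : ℝ) ^ r * ee u ({i}ᶜ) r *
        hZ (n + 1) (((lam j + (n - (j : ℕ)) : ℕ) : ℤ) - r) u) (n + 1)]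
  apply Finset.sum_congr rfl
  intro r _
  simp only [Matrix.of_apply]
  rw [mul_comm]
  congr 2
  have h1 : (r : ℕ) < n + 1 := r.isLt
  have h2 : (j : ℕ) < n + 1 := j.isLt
  rw [Fin.val_rev]
  omega

/-- For the staircase partition `λ = (nl, (n−1)l, …, l)`, the Schur polynomial in `n+1`
pairwise distinct variables factorizes as
`S_λ(u₁,…,u_{n+1}) = Π_{i<j} (u_i^{l+1} − u_j^{l+1})/(u_i − u_j)`. -/
theorem schur_staircase (n l : ℕ) (u : Fin (n + 1) → ℝ) (hu : Function.Injective u) :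
    schur (fun i : Fin n => (n - (i : ℕ)) * l) u
      = ∏ p ∈ Finset.univ.filter (fun p : Fin (n + 1) × Fin (n + 1) => p.1 < p.2),
          (u p.1 ^ (l + 1) - u p.2 ^ (l + 1)) / (u p.1 - u p.2) := by
  classical
  set JT : (Fin (n + 1) → ℕ) → Matrix (Fin (n + 1)) (Fin (n + 1)) ℝ :=
    fun lam => Matrix.of fun i j : Fin (n + 1) => hZ (n + 1) ((lam i : ℤ) - i + j) u with hJT
  set Emat : Matrix (Fin (n + 1)) (Fin (n + 1)) ℝ :=
    Matrix.of (fun r i : Fin (n + 1) => (-1 : ℝ) ^ (r : ℕ) * ee u ({i}ᶜ) (r : ℕ)) with hE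
  set sgn : ℝ := ((Equiv.Perm.sign (Fin.revPerm : Equiv.Perm (Fin (n + 1))) : ℤ) : ℝ) with hsgn
  have hsgn_sq : sgn * sgn = 1 := by
    rw [hsgn]
    rcases Int.units_eq_one_or
      (Equiv.Perm.sign (Fin.revPerm : Equiv.Perm (Fin (n + 1)))) with h | h <;>
      rw [h] <;> norm_num
  -- the key determinant identity
  have main : ∀ (lam : Fin (n + 1) → ℕ) (w : Fin (n + 1) → ℝ),
      (∀ j i : Fin (n + 1), u i ^ (lam j + (n - (j : ℕ))) = w i ^ (n - (j : ℕ))) →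
      (JT lam).det * Emat.det = ∏ i, ∏ j ∈ Ioi i, (w j - w i) := by
    intro lam w hw
    have hsub : (Matrix.of fun j r : Fin (n + 1) =>
        hZ (n + 1) ((lam j : ℤ) - j + (Fin.rev r : ℕ)) u)
        = (JT lam).submatrix id ⇑(Fin.revPerm : Equiv.Perm (Fin (n + 1))) := by
      ext j r; rfl
    have h1 := congrArg Matrix.det (mul_id n u lam)
    rw [Matrix.det_mul, hsub, Matrix.det_permute', ← hE] at h1
    -- h1 : sgn * det (JT lam) * det Emat = det A
    have hA : (Matrix.of fun j i : Fin (n + 1) => u i ^ (lam j + (n - (j : ℕ))))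
        = (Matrix.transpose (Matrix.vandermonde w)).submatrix
            ⇑(Fin.revPerm : Equiv.Perm (Fin (n + 1))) id := by
      ext j i
      simp only [Matrix.of_apply, Matrix.submatrix_apply, Matrix.transpose_apply,
        Matrix.vandermonde_apply, Fin.revPerm_apply, Fin.val_rev]
      rw [hw j i]
      congr 1
      have := j.isLt
      omega
    rw [hA, Matrix.det_permute, Matrix.det_transpose, Matrix.det_vandermonde,
      ← hsgn] at h1
    linear_combination sgn * h1
      + ((∏ i, ∏ j ∈ Ioi i, (w j - w i)) - (JT lam).det * Emat.det) * hsgn_sq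
  -- det (JT 0) = 1
  have hJT0 : (JT 0).det = 1 := by
    rw [Matrix.det_of_upperTriangular]
    · apply Finset.prod_eq_one
      intro i _
      simp only [hJT, Matrix.of_apply, Pi.zero_apply, Nat.cast_zero, zero_sub, neg_add_cancel]
      unfold hZ
      rw [if_pos le_rfl, Int.toNat_zero, hh_zero]
    · intro i j hij
      simp only [hJT, Matrix.of_apply, Pi.zero_apply, Nat.cast_zero, zero_sub]
      unfold hZ
      rw [if_neg]
      simp only [id] at hij
      have : (j : ℤ) < (i : ℤ) := by exact_mod_cast hij
      omega
  have hE0 : Emat.det = ∏ i, ∏ j ∈ Ioi i, (u j - u i) := by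
    have h0 := main 0 u (fun j i => by simp)
    rw [hJT0, one_mul] at h0
    exact h0
  have hst := main (fun j => (n - (j : ℕ)) * l) (fun i => u i ^ (l + 1))
    (fun j i => by rw [← pow_mul]; congr 1; ring)
  rw [hE0] at hst
  have hVu : (∏ i, ∏ j ∈ Ioi i, (u j - u i)) ≠ 0 := by
    rw [Finset.prod_ne_zero_iff]
    intro i _
    rw [Finset.prod_ne_zero_iff]
    intro j hj
    exact sub_ne_zero.mpr (fun h => (ne_of_lt (Finset.mem_Ioi.mp hj)) (hu h).symm)
  -- padding: the (n+1)×(n+1) Jacobi–Trudi determinant equals the n×n one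
  have hbig : (JT (fun j => (n - (j : ℕ)) * l)).det
      = schur (fun i : Fin n => (n - (i : ℕ)) * l) u := by
    rw [hJT]
    unfold schur
    rw [Matrix.det_succ_row _ (Fin.last n)]
    rw [Finset.sum_eq_single (Fin.last n)]
    · have harg : ((((n - (Fin.last n : ℕ)) * l : ℕ) : ℤ)
          - (Fin.last n : ℕ) + (Fin.last n : ℕ)) = 0 := by
        simp [Fin.val_last]
      simp only [Matrix.of_apply, harg]
      have h0 : hZ (n + 1) 0 u = 1 := by
        unfold hZ
        rw [if_pos le_rfl, Int.toNat_zero, hh_zero]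
      rw [h0]
      have hsign : ((-1 : ℝ)) ^ ((Fin.last n : ℕ) + (Fin.last n : ℕ)) = 1 :=
        Even.neg_one_pow ⟨n, by simp [Fin.val_last]⟩
      rw [hsign, one_mul, one_mul, Fin.succAbove_last]
      congr 1
    · intro j _ hj
      have hjlt : (j : ℕ) < n := by
        rcases Fin.lt_or_eq_of_le (Fin.le_last j) with h | h
        · exact_mod_cast h
        · exact absurd h hj
      have hzero : hZ (n + 1) ((((n - ((Fin.last n : Fin (n+1)) : ℕ)) * l : ℕ) : ℤ)
          - (((Fin.last n : Fin (n+1)) : ℕ) : ℤ) + (((j : ℕ) : ℤ))) u = 0 := by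
        have he : ((n : ℕ) - ((Fin.last n : Fin (n+1)) : ℕ)) * l = 0 := by
          simp [Fin.val_last]
        rw [he]
        unfold hZ
        rw [if_neg]
        have hl : ((Fin.last n : Fin (n+1)) : ℕ) = n := Fin.val_last n
        omega
      simp only [Matrix.of_apply]
      rw [hzero, mul_zero, zero_mul]
    · simp
  -- pair product as a double product
  have hpairs : ∀ f : Fin (n + 1) → Fin (n + 1) → ℝ,
      ∏ p ∈ Finset.univ.filter (fun p : Fin (n + 1) × Fin (n + 1) => p.1 < p.2), f p.1 p.2
        = ∏ i, ∏ j ∈ Ioi i, f i j := by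
    intro f
    rw [Finset.prod_filter, Fintype.prod_prod_type]
    apply Finset.prod_congr rfl
    intro i _
    rw [← Finset.prod_filter]
    congr 1
    ext j
    simp
  rw [← hbig, hpairs (fun i j => (u i ^ (l + 1) - u j ^ (l + 1)) / (u i - u j))]
  have hterm : ∀ i j : Fin (n + 1),
      (u i ^ (l + 1) - u j ^ (l + 1)) / (u i - u j)
        = (u j ^ (l + 1) - u i ^ (l + 1)) / (u j - u i) := by
    intro i j
    rw [← neg_sub (u j ^ (l + 1)), ← neg_sub (u j), neg_div_neg_eq]
  rw [Finset.prod_congr rfl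
    (fun i _ => Finset.prod_congr rfl (fun j _ => hterm i j))]
  simp only [Finset.prod_div_distrib]
  rw [eq_div_iff hVu]
  exact hst
end

section
/- Let λ = (λ₁,…,λₙ) be a partition of length at most n, with Müntz tableau (λ⁽⁰⁾,…,λ⁽ⁿ⁾) and define φ_j(u₁,…,uₙ) = (f_{λ⁽⁰⁾}(n)/f_{λ⁽ʲ⁾}(n)) · S_{λ⁽ʲ⁾}(u₁,…,uₙ)/S_{λ⁽⁰⁾}(u₁,…,uₙ). Then h_{λ₁+n}(u₁,…,uₙ) = Σ_{j=1}^{n} (−1)^{j+1} (f_{λ⁽ʲ⁾}(n)/f_{λ⁽⁰⁾}(n)) · h_{λ_{j+1}+n−j}(u₁,…,uₙ) · φ_j(u₁,…,uₙ), where λ_{n+1} = 0 and h_m is the complete homogeneous symmetric polynomial of degree m. -/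
/-- A partition, viewed as a function `ℕ → ℕ` padded by trailing zeros. -/
def padded {m : ℕ} (lam : Fin m → ℕ) : ℕ → ℕ := fun i => if h : i < m then lam ⟨i, h⟩ else 0

/-- The `j`-th partition `λ⁽ʲ⁾` of the Müntz tableau of `λ` (padded with trailing zeros):
`λ⁽ʲ⁾ = (λ₁+1,…,λ_j+1, λ_{j+2},…,λₙ)`. -/
def muntz {m : ℕ} (lam : Fin m → ℕ) (j : ℕ) : Fin m → ℕ :=
  fun i => if (i : ℕ) < j then padded lam i + 1 else padded lam ((i : ℕ) + 1)

/-!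
Expanding along its last column the Jacobi–Trudi determinant of `(λ₁+1, …, λₙ+1, 1)` whose last
column has been replaced by a copy of the one before gives
`∑_{i=0}^{n} (-1)^i h_{λ_{i+1}+n-i} S_{λ⁽ⁱ⁾} = 0`, whose `i = 0` term is `h_{λ₁+n} S_{λ⁽⁰⁾}`.
The factors `f_{λ⁽ʲ⁾}(n) / f_{λ⁽⁰⁾}(n)` then cancel, once we know that the Schur polynomials
involved do not vanish. They are in fact positive at positive arguments: the Toeplitz matrix
`(h_{q-p}(u))` is the product over the variables `uᵢ` of the totally nonnegative Toeplitz
matrices `(uᵢ^{q-p})`, and by Cauchy–Binet the minor of it that equals `S_μ(u)` contains the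
positive term indexed by the partition `(μ₂, μ₃, …)`, which interlaces `μ`.
-/

open Finset Matrix Equiv Function

theorem Finset.sum_injective_eq_sum_strictMono_comp_perm {α M : Type*} [LinearOrder α] [Fintype α]
    [AddCommMonoid M] {l : ℕ} (g : (Fin l → α) → M) :
    ∑ p : Fin l → α with Injective p, g p
      = ∑ f : Fin l → α with StrictMono f, ∑ τ : Perm (Fin l), g (f ∘ τ) := by
  rw [← sum_product']
  refine (sum_bij (fun x _ => x.1 ∘ x.2) ?_ ?_ ?_ (fun _ _ => rfl)).symm
  · intro x hx
    simp only [mem_product, mem_filter_univ] at hx ⊢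
    exact hx.1.injective.comp x.2.injective
  · rintro ⟨f, τ⟩ hx ⟨g, ρ⟩ hy hfg
    simp only [mem_product, mem_filter_univ] at hx hy
    have hrange : Set.range f = Set.range g := by
      simpa only [EquivLike.range_comp] using congrArg Set.range hfg
    obtain rfl := (hx.1.range_inj hy.1).1 hrange
    obtain rfl : τ = ρ := Equiv.ext fun i => hx.1.injective (congrFun hfg i)
    rfl
  · intro p hp
    rw [mem_filter_univ] at hp
    refine ⟨(p ∘ Tuple.sort p, (Tuple.sort p)⁻¹), ?_, ?_⟩
    · simp only [mem_product, mem_filter_univ, mem_univ, and_true]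
      exact (Tuple.monotone_sort p).strictMono_of_injective (hp.comp (Tuple.sort p).injective)
    · ext i
      simp

namespace Matrix

variable {R : Type*} [CommRing R]

theorem det_mul_eq_sum_prod_mul_det_submatrix {m n : Type*} [Fintype m] [DecidableEq m]
    [Fintype n] (A : Matrix m n R) (B : Matrix n m R) :
    (A * B).det = ∑ p : m → n, (∏ i, B (p i) i) * (A.submatrix id p).det := by
  simp only [det_apply', mul_apply, prod_univ_sum, mul_sum, Fintype.piFinset_univ,
    prod_mul_distrib, submatrix_apply, id]
  rw [sum_comm]
  exact sum_congr rfl fun p _ => sum_congr rfl fun σ _ => by ring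

theorem det_mul_eq_sum_strictMono {l N : ℕ} (A : Matrix (Fin l) (Fin N) R)
    (B : Matrix (Fin N) (Fin l) R) :
    (A * B).det = ∑ f : Fin l → Fin N with StrictMono f,
      (A.submatrix id f).det * (B.submatrix f id).det := by
  rw [det_mul_eq_sum_prod_mul_det_submatrix, ← sum_filter_of_ne (p := Injective),
    sum_injective_eq_sum_strictMono_comp_perm]
  · refine sum_congr rfl fun f _ => ?_
    have hcols (τ : Perm (Fin l)) : A.submatrix id (f ∘ τ) = (A.submatrix id f).submatrix id τ :=
      rfl
    simp_rw [hcols, det_permute', det_apply' (B.submatrix f id), mul_sum]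
    refine sum_congr rfl fun τ _ => ?_
    rw [mul_comm, mul_comm (Perm.sign τ : R), mul_assoc]
    rfl
  · intro p _ hp
    contrapose! hp
    obtain ⟨i, j, hij, hne⟩ := not_injective_iff.1 hp
    rw [det_zero_of_column_eq hne (fun k => by simp [hij]), mul_zero]

section Ordered

variable [PartialOrder R] [IsOrderedRing R]

def IsTotallyNonneg {m n : ℕ} (A : Matrix (Fin m) (Fin n) R) : Prop :=
  ∀ ⦃l : ℕ⦄ (r : Fin l → Fin m) (c : Fin l → Fin n), StrictMono r → StrictMono c →
    0 ≤ (A.submatrix r c).det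

theorem IsTotallyNonneg.mul {m n p : ℕ} {A : Matrix (Fin m) (Fin n) R}
    {B : Matrix (Fin n) (Fin p) R} (hA : A.IsTotallyNonneg) (hB : B.IsTotallyNonneg) :
    (A * B).IsTotallyNonneg := by
  intro l r c hr hc
  rw [submatrix_mul _ _ r id c bijective_id, det_mul_eq_sum_strictMono]
  exact sum_nonneg fun f hf =>
    mul_nonneg (hA r f hr ((mem_filter_univ _).1 hf)) (hB f c ((mem_filter_univ _).1 hf) hc)

theorem det_indicator_le_nonneg {α : Type*} [LinearOrder α] {l : ℕ}
    (r c : Fin l → α) (hr : Monotone r) (hc : Monotone c) :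
    0 ≤ (of fun i j => if r i ≤ c j then (1 : R) else 0).det := by
  induction l with
  | zero => simp
  | succ n ih =>
    by_cases hcol : ∃ j : Fin n, r (Fin.last n) ≤ c j.castSucc
    · obtain ⟨j, hj⟩ := hcol
      have hi (i : Fin (n + 1)) := hr (Fin.le_last i)
      rw [det_zero_of_column_eq (Fin.castSucc_lt_last j).ne fun i => by
        simp only [of_apply, if_pos ((hi i).trans hj),
          if_pos ((hi i).trans (hj.trans (hc (Fin.le_last _))))]]
    · push Not at hcol
      rw [det_succ_row _ (Fin.last n), Fin.sum_univ_castSucc,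
        sum_eq_zero fun j _ => by simp [(hcol j).not_ge]]
      simp only [of_apply, Fin.val_last, Fin.succAbove_last, zero_add]
      rw [← two_mul, pow_mul, neg_one_sq, one_pow, one_mul]
      exact mul_nonneg (by split_ifs <;> simp)
        (ih _ _ (hr.comp Fin.strictMono_castSucc.monotone)
          (hc.comp Fin.strictMono_castSucc.monotone))

end Ordered

end Matrix

theorem strictMono_of_val_eq_sub {l N C : ℕ} {μ : Fin l → ℕ} (hμ : Antitone μ)
    (hμC : ∀ i, μ i ≤ C) {r : Fin l → Fin N} (hr : ∀ i, (r i : ℕ) = C + i - μ i) :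
    StrictMono r := fun a b hab => by
  have := hμ hab.le; have := hμC a
  have : (a : ℕ) < b := hab
  rw [Fin.lt_def, hr, hr]
  omega

noncomputable def geomToeplitz {R : Type*} [Semiring R] (N : ℕ) (a : R) :
    Matrix (Fin N) (Fin N) R :=
  of fun p q => if p ≤ q then a ^ ((q : ℕ) - p) else 0

section GeomToeplitz

variable {K : Type*} [Field K] [LinearOrder K] [IsStrictOrderedRing K] {N : ℕ} {a : K}

theorem isTotallyNonneg_geomToeplitz (ha : 0 < a) : (geomToeplitz N a).IsTotallyNonneg := by
  intro l r c hr hc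
  have hconj : (geomToeplitz N a).submatrix r c = diagonal (fun i => (a ^ (r i : ℕ))⁻¹) *
      (of fun i j => if r i ≤ c j then 1 else 0) * diagonal (fun j => a ^ (c j : ℕ)) := by
    ext i j
    simp only [submatrix_apply, geomToeplitz, diagonal_mul, mul_diagonal, of_apply]
    split_ifs with hij
    · rw [pow_sub₀ a ha.ne' hij, mul_one, mul_comm]
    · simp
  rw [hconj, det_mul, det_mul, det_diagonal, det_diagonal]
  have := det_indicator_le_nonneg (R := K) r c hr.monotone hc.monotone
  positivity

theorem det_submatrix_geomToeplitz_pos (ha : 0 < a) {l : ℕ} (r c : Fin l → Fin N)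
    (hdiag : ∀ i, r i ≤ c i) (hbelow : ∀ i j, j < i → c j < r i) :
    0 < ((geomToeplitz N a).submatrix r c).det := by
  have htri : ((geomToeplitz N a).submatrix r c).IsUpperTriangular := fun i j hij => by
    simp [geomToeplitz, (hbelow i j hij).not_ge]
  rw [det_of_isUpperTriangular htri]
  exact prod_pos fun i _ => by simp [geomToeplitz, hdiag i, pow_pos ha]

theorem det_submatrix_geomToeplitz_pos_of_interlace (ha : 0 < a) {l C : ℕ} {μ ν : Fin l → ℕ}
    (hνμ : ∀ i, ν i ≤ μ i) (hμν : ∀ i j, j < i → μ i ≤ ν j) (hμC : ∀ i, μ i ≤ C)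
    (r s : Fin l → Fin N) (hr : ∀ i, (r i : ℕ) = C + i - μ i) (hs : ∀ i, (s i : ℕ) = C + i - ν i) :
    0 < ((geomToeplitz N a).submatrix r s).det := by
  refine det_submatrix_geomToeplitz_pos ha r s (fun i => ?_) (fun i j hji => ?_)
  · have := hνμ i
    rw [Fin.le_def, hr, hs]
    omega
  · have := hμν i j hji; have := hνμ j; have := hμC i; have := hμC j
    have : (j : ℕ) < i := hji
    rw [Fin.lt_def, hr, hs]
    omega

end GeomToeplitz

lemma hh_zero_right (n : ℕ) (u : Fin n → ℝ) : hh n 0 u = 1 := by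
  simp [hh, Nat.antidiagonalTuple_zero_right]

lemma hh_one (d : ℕ) (u : Fin 1 → ℝ) : hh 1 d u = u 0 ^ d := by
  simp [hh]

lemma hh_succ (k d : ℕ) (u : Fin (k + 1) → ℝ) :
    hh (k + 1) d u = ∑ ab ∈ antidiagonal d, u 0 ^ ab.1 * hh k ab.2 (Fin.tail u) := by
  simp only [hh, mul_sum]
  rw [sum_sigma' (antidiagonal d) (fun ab => Nat.antidiagonalTuple k ab.2)]
  refine sum_nbij' (fun c => ⟨(c 0, d - c 0), Fin.tail c⟩) (fun x => Fin.cons x.1.1 x.2)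
    ?_ ?_ ?_ ?_ ?_
  · intro c hc
    simp only [mem_sigma, HasAntidiagonal.mem_antidiagonal, Nat.mem_antidiagonalTuple,
      Fin.sum_univ_succ] at hc ⊢
    exact ⟨by omega, by simp only [Fin.tail]; omega⟩
  · rintro ⟨⟨a, b⟩, c⟩ hx
    simp only [mem_sigma, HasAntidiagonal.mem_antidiagonal,
      Nat.mem_antidiagonalTuple] at hx ⊢
    rw [Fin.sum_cons, hx.2, hx.1]
  · intro c _
    exact Fin.cons_self_tail c
  · rintro ⟨⟨a, b⟩, c⟩ hx
    simp only [mem_sigma, HasAntidiagonal.mem_antidiagonal] at hx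
    simp only [Fin.cons_zero, Fin.tail_cons, ← hx.1, Nat.add_sub_cancel_left]
  · intro c _
    simp only [Fin.prod_univ_succ, Fin.tail]

lemma hZ_of_neg {n : ℕ} {d : ℤ} (hd : d < 0) (u : Fin n → ℝ) : hZ n d u = 0 := by
  simp [hZ, hd.not_ge]

lemma hZ_natCast (n d : ℕ) (u : Fin n → ℝ) : hZ n d u = hh n d u := by
  simp [hZ]

lemma hZ_succ_eq_sum_range {k : ℕ} (u : Fin (k + 1) → ℝ) {d : ℤ} {M : ℕ} (hdM : d < M) :
    hZ (k + 1) d u = ∑ a ∈ range M, u 0 ^ a * hZ k (d - a) (Fin.tail u) := by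
  rcases lt_or_ge d 0 with hd | hd
  · rw [hZ_of_neg hd]
    exact (sum_eq_zero fun a _ => by rw [hZ_of_neg (by omega), mul_zero]).symm
  lift d to ℕ using hd
  have hsub : range (d + 1) ⊆ range M := range_subset_range.2 (by omega)
  rw [hZ_natCast, hh_succ, Nat.sum_antidiagonal_eq_sum_range_succ_mk, ← sum_subset hsub]
  · refine sum_congr rfl fun a ha => ?_
    rw [mem_range] at ha
    rw [show (d : ℤ) - a = ((d - a : ℕ) : ℤ) by omega, hZ_natCast]
  · intro a _ ha
    rw [mem_range] at ha
    rw [hZ_of_neg (by omega), mul_zero]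

noncomputable def hToeplitz (k N : ℕ) (u : Fin k → ℝ) : Matrix (Fin N) (Fin N) ℝ :=
  of fun p q => hZ k ((q : ℤ) - p) u

lemma hToeplitz_one (N : ℕ) (u : Fin 1 → ℝ) : hToeplitz 1 N u = geomToeplitz N (u 0) := by
  ext p q
  simp only [hToeplitz, geomToeplitz, of_apply]
  split_ifs with hpq
  · rw [show (q : ℤ) - p = ((q - p : ℕ) : ℤ) by omega, hZ_natCast, hh_one]
  · exact hZ_of_neg (by omega) u

lemma hToeplitz_succ (k N : ℕ) (u : Fin (k + 1) → ℝ) :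
    hToeplitz (k + 1) N u = geomToeplitz N (u 0) * hToeplitz k N (Fin.tail u) := by
  ext p q
  simp only [hToeplitz, geomToeplitz, mul_apply, of_apply, ite_mul, zero_mul,
    Fin.le_iff_val_le_val]
  rw [Fin.sum_univ_eq_sum_range (fun s => if (p : ℕ) ≤ s then
      u 0 ^ (s - (p : ℕ)) * hZ k ((q : ℤ) - s) (Fin.tail u) else 0), ← sum_filter,
    show (range N).filter (fun s => (p : ℕ) ≤ s) = Ico (p : ℕ) N by ext; simp [and_comm],
    sum_Ico_eq_sum_range, hZ_succ_eq_sum_range u (M := N - p) (by omega)]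
  refine sum_congr rfl fun a _ => ?_
  rw [Nat.add_sub_cancel_left]
  congr 2
  push_cast
  ring

theorem isTotallyNonneg_hToeplitz (k N : ℕ) (u : Fin (k + 1) → ℝ) (hu : ∀ i, 0 < u i) :
    (hToeplitz (k + 1) N u).IsTotallyNonneg := by
  induction k with
  | zero => rw [hToeplitz_one]; exact isTotallyNonneg_geomToeplitz (hu 0)
  | succ k ih =>
    rw [hToeplitz_succ]
    exact (isTotallyNonneg_geomToeplitz (hu 0)).mul (ih _ fun i => hu i.succ)

section Padded

variable {m : ℕ} (lam : Fin m → ℕ)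

@[simp] lemma padded_coe (i : Fin m) : padded lam i = lam i := by
  simp [padded]

lemma padded_of_le {i : ℕ} (hi : m ≤ i) : padded lam i = 0 := by
  simp [padded, hi.not_gt]

variable {lam}

lemma padded_antitone (hlam : Antitone lam) : Antitone (padded lam) := by
  intro a b hab
  by_cases hb : b < m
  · rw [padded, padded, dif_pos hb, dif_pos (hab.trans_lt hb)]
    exact hlam (Fin.mk_le_mk.2 hab)
  · rw [padded_of_le lam (not_lt.1 hb)]
    exact Nat.zero_le _

lemma le_padded_zero (hlam : Antitone lam) (i : Fin m) : lam i ≤ padded lam 0 :=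
  padded_coe lam i ▸ padded_antitone hlam (Nat.zero_le _)

lemma muntz_antitone (hlam : Antitone lam) (j : ℕ) : Antitone (muntz lam j) := by
  intro a b hab
  have hab' : (a : ℕ) ≤ b := hab
  have h := padded_antitone hlam
  unfold muntz
  split_ifs with hb ha ha
  · exact Nat.add_le_add_right (h hab') 1
  · omega
  · exact (h (by omega : (a : ℕ) ≤ b + 1)).trans (Nat.le_succ _)
  · exact h (by omega)

end Padded

theorem schur_eq_det_submatrix_hToeplitz {l k N : ℕ} (μ : Fin l → ℕ) (u : Fin k → ℝ) {C : ℕ}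
    (hμC : ∀ i, μ i ≤ C) (r c : Fin l → Fin N) (hr : ∀ i, (r i : ℕ) = C + i - μ i)
    (hc : ∀ i, (c i : ℕ) = C + i) :
    schur μ u = ((hToeplitz k N u).submatrix r c).det := by
  unfold schur
  congr 1
  ext i j
  simp only [of_apply, submatrix_apply, hToeplitz]
  congr 1
  have := hr i; have := hc j; have := hμC i
  omega

theorem det_submatrix_hToeplitz_pos (k N : ℕ) (u : Fin (k + 1) → ℝ) (hu : ∀ i, 0 < u i)
    {l : ℕ} (μ : Fin l → ℕ) (hμ : Antitone μ) (hlen : ∀ i : Fin l, k < i → μ i = 0)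
    (C : ℕ) (hμC : ∀ i, μ i ≤ C) (r c : Fin l → Fin N) (hr : ∀ i, (r i : ℕ) = C + i - μ i)
    (hc : ∀ i, (c i : ℕ) = C + i) :
    0 < ((hToeplitz (k + 1) N u).submatrix r c).det := by
  have hc' (i : Fin l) : (c i : ℕ) = C + i - 0 := hc i
  induction k generalizing μ r with
  | zero =>
    rw [hToeplitz_one]
    exact det_submatrix_geomToeplitz_pos_of_interlace (hu 0) (fun _ => Nat.zero_le _)
      (fun i j hji => (hlen i ((Nat.zero_le _).trans_lt hji)).le) hμC r c hr hc'
  | succ k ih =>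
    -- Cauchy–Binet: the term through the rows of `ν = (μ₂, μ₃, …)`, which interlaces `μ`,
    -- is positive, and all others are nonnegative.
    set ν : Fin l → ℕ := fun i => padded μ (i + 1)
    have hνμ (i : Fin l) : ν i ≤ μ i := padded_coe μ i ▸ padded_antitone hμ (Nat.le_succ _)
    have hμν (i j : Fin l) (hji : j < i) : μ i ≤ ν j :=
      padded_coe μ i ▸ padded_antitone hμ (Nat.succ_le_of_lt hji)
    have hν : Antitone ν := fun a b hab => padded_antitone hμ (Nat.succ_le_succ hab)
    have hνlen (i : Fin l) (hi : k < i) : ν i = 0 := by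
      simp only [ν, padded]
      split_ifs
      · exact hlen _ (by simp; omega)
      · rfl
    have hνC (i : Fin l) : ν i ≤ C := (hνμ i).trans (hμC i)
    let S : Fin l → Fin N := fun i => ⟨C + i - ν i, by have := (c i).isLt; have := hc i; omega⟩
    have hS : StrictMono S := strictMono_of_val_eq_sub hν hνC fun _ => rfl
    have hr_mono := strictMono_of_val_eq_sub hμ hμC hr
    have hc_mono := strictMono_of_val_eq_sub antitone_const (fun _ => Nat.zero_le C) hc'
    rw [hToeplitz_succ, submatrix_mul _ _ r id c bijective_id, det_mul_eq_sum_strictMono]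
    refine lt_of_lt_of_le ?_ (single_le_sum (fun f hf => mul_nonneg
      (isTotallyNonneg_geomToeplitz (hu 0) r f hr_mono ((mem_filter_univ _).1 hf))
      (isTotallyNonneg_hToeplitz k N _ (fun i => hu i.succ) f c ((mem_filter_univ _).1 hf)
        hc_mono)) ((mem_filter_univ S).2 hS))
    exact mul_pos (det_submatrix_geomToeplitz_pos_of_interlace (hu 0) hνμ hμν hμC r S hr
        fun _ => rfl)
      (ih (Fin.tail u) (fun i => hu i.succ) ν hν hνlen hνC S fun _ => rfl)

theorem schur_pos {l k : ℕ} (μ : Fin l → ℕ) (hμ : Antitone μ) (hl : l ≤ k + 1)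
    (u : Fin (k + 1) → ℝ) (hu : ∀ i, 0 < u i) : 0 < schur μ u := by
  set C := padded μ 0
  have hμC := le_padded_zero hμ
  rw [schur_eq_det_submatrix_hToeplitz (N := C + l) μ u hμC
    (fun i => ⟨C + i - μ i, by omega⟩) (fun i => ⟨C + i, by omega⟩) (fun _ => rfl) (fun _ => rfl)]
  exact det_submatrix_hToeplitz_pos k _ u hu μ hμ (fun i hi => by omega) C hμC _ _
    (fun _ => rfl) (fun _ => rfl)

theorem schur_snoc_zero {l k : ℕ} (μ : Fin l → ℕ) (u : Fin k → ℝ) :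
    schur (Fin.snoc μ 0 : Fin (l + 1) → ℕ) u = schur μ u := by
  unfold schur
  rw [det_succ_row _ (Fin.last l), Fin.sum_univ_castSucc, sum_eq_zero fun j _ => by
    rw [of_apply, Fin.snoc_last, hZ_of_neg (by simp), mul_zero, zero_mul]]
  simp only [of_apply, Fin.snoc_last, Fin.succAbove_last, Fin.val_last, zero_add]
  rw [show ((0 : ℕ) : ℤ) - l + l = (0 : ℕ) by ring, hZ_natCast, hh_zero_right, ← two_mul,
    pow_mul, neg_one_sq, one_pow, one_mul, one_mul]
  congr 1
  ext i j
  simp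

theorem muntz_zero {m : ℕ} (lam : Fin (m + 1) → ℕ) :
    muntz lam 0 = Fin.snoc (fun i : Fin m => lam i.succ) 0 := by
  funext i
  simp only [muntz, Nat.not_lt_zero, if_false]
  induction i using Fin.lastCases with
  | last => rw [Fin.snoc_last, Fin.val_last, padded_of_le lam (le_refl _)]
  | cast j => rw [Fin.snoc_castSucc, Fin.val_castSucc, ← Fin.val_succ, padded_coe]

theorem sum_range_neg_one_pow_mul_hh_mul_schur_muntz {m k : ℕ} (lam : Fin (m + 1) → ℕ)
    (u : Fin k → ℝ) :
    ∑ i ∈ range (m + 2), (-1 : ℝ) ^ i * hh k (padded lam i + (m + 1) - i) u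
      * schur (muntz lam i) u = 0 := by
  -- the Jacobi–Trudi matrix of `(λ₁ + 1, …, λₙ + 1, 1)` with its last column replaced by a
  -- copy of the one before: its minors along the last column are the `S_{λ⁽ⁱ⁾}`
  let A : Matrix (Fin (m + 2)) (Fin (m + 2)) ℝ :=
    of fun i c => hZ k ((padded lam i : ℤ) + 1 - i + (min (c : ℕ) m : ℕ)) u
  have hA : A.det = 0 :=
    det_zero_of_column_eq (i := ⟨m, by omega⟩) (j := Fin.last (m + 1))
      (by simp [Fin.ext_iff]) fun i => by simp [A]
  have hlast (i : Fin (m + 2)) : A i (Fin.last (m + 1)) = hh k (padded lam i + (m + 1) - i) u := by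
    simp only [A, of_apply, Fin.val_last]
    rw [← hZ_natCast]
    congr 1
    have := i.isLt
    omega
  have hminor (i : Fin (m + 2)) :
      (A.submatrix i.succAbove (Fin.last (m + 1)).succAbove).det = schur (muntz lam i) u := by
    unfold schur
    congr 1
    ext s t
    simp only [A, submatrix_apply, of_apply, Fin.succAbove_last, Fin.val_castSucc,
      min_eq_left (Nat.le_of_lt_succ t.isLt)]
    unfold Fin.succAbove muntz
    split_ifs with h₁ h₂ h₂ <;> simp only [Fin.lt_def, Fin.val_castSucc, Fin.val_succ] at h₁ ⊢
    · push_cast; ring_nf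
    · omega
    · omega
    · push_cast; ring_nf
  rw [det_succ_column A (Fin.last (m + 1))] at hA
  rw [← Fin.sum_univ_eq_sum_range (fun i => (-1 : ℝ) ^ i * hh k (padded lam i + (m + 1) - i) u
      * schur (muntz lam i) u), ← neg_one_pow_mul_eq_zero_iff (n := m + 1), ← hA, mul_sum]
  refine sum_congr rfl fun i _ => ?_
  rw [hlast, hminor, Fin.val_last, pow_add, ← mul_assoc]
  ring

theorem hh_mul_schur_tail_eq_sum {m k : ℕ} (lam : Fin (m + 1) → ℕ) (u : Fin k → ℝ) :
    hh k (lam 0 + (m + 1)) u * schur (fun i : Fin m => lam i.succ) u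
      = ∑ j ∈ Icc 1 (m + 1), (-1 : ℝ) ^ (j + 1) * hh k (padded lam j + (m + 1) - j) u
          * schur (muntz lam j) u := by
  have h := sum_range_neg_one_pow_mul_hh_mul_schur_muntz lam u
  rw [sum_range_succ', muntz_zero, schur_snoc_zero] at h
  have hpad : padded lam 0 = lam 0 := padded_coe lam 0
  simp only [pow_zero, one_mul, Nat.sub_zero, hpad] at h
  rw [← Ico_add_one_right_eq_Icc, sum_Ico_eq_sum_range]
  simp only [Nat.add_sub_cancel, add_comm 1, pow_succ _ (_ + 1), mul_neg_one, neg_mul,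
    sum_neg_distrib]
  linarith

/-- Jacobi–Trudi expansion (Proposition 5): with `φ_j = (f_{λ⁽⁰⁾}(n)/f_{λ⁽ʲ⁾}(n)) ·
S_{λ⁽ʲ⁾}/S_{λ⁽⁰⁾}`, one has
`h_{λ₁+n} = Σ_{j=1}^{n} (−1)^{j+1} (f_{λ⁽ʲ⁾}(n)/f_{λ⁽⁰⁾}(n)) · h_{λ_{j+1}+n−j} · φ_j`,
where `n = m+1`, `λ_{n+1} = 0` and `f_μ(n) = S_μ(1,…,1)` (n ones). -/
theorem jacobi_trudi_blossom_expansion (m : ℕ) (lam : Fin (m + 1) → ℕ) (hlam : Antitone lam)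
    (u : Fin (m + 1) → ℝ) (hu : ∀ i, 0 < u i) :
    hh (m + 1) (lam 0 + (m + 1)) u
      = ∑ j ∈ Finset.Icc 1 (m + 1),
          (-1 : ℝ) ^ (j + 1)
          * (schur (muntz lam j) (fun _ : Fin (m + 1) => (1 : ℝ))
              / schur (fun i : Fin m => lam i.succ) (fun _ : Fin (m + 1) => (1 : ℝ)))
          * hh (m + 1) (padded lam j + (m + 1) - j) u
          * ((schur (fun i : Fin m => lam i.succ) (fun _ : Fin (m + 1) => (1 : ℝ))
                / schur (muntz lam j) (fun _ : Fin (m + 1) => (1 : ℝ)))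
              * schur (muntz lam j) u / schur (fun i : Fin m => lam i.succ) u) := by
  have htail : Antitone (fun i : Fin m => lam i.succ) := fun a b hab =>
    hlam (Fin.succ_le_succ_iff.2 hab)
  have hS₀ := schur_pos _ htail (by omega) u hu
  have hf₀ := schur_pos _ htail (by omega) (fun _ : Fin (m + 1) => (1 : ℝ)) fun _ => one_pos
  have hf (j : ℕ) := schur_pos _ (muntz_antitone hlam j) le_rfl (fun _ => (1 : ℝ)) fun _ => one_pos
  rw [← mul_div_cancel_right₀ (hh (m + 1) (lam 0 + (m + 1)) u) hS₀.ne', hh_mul_schur_tail_eq_sum,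
    sum_div]
  refine sum_congr rfl fun j _ => ?_
  have := (hf j).ne'
  field_simp
end
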